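/- arXiv:1904.06367 — 3 statements merged into one kernel-verified Lean document; each statement's English description precedes it below -/
import Mathlib

section
/- Let F: 𝒢 → ℋ be a functor between finite groupoids, V a rational vector space, and f: π₀(𝒢) → V a function. Then for every object h of ℋ, the push-forward satisfies (F_* f)([h]) = |Aut_ℋ(h)| · ∑ᵢ f(gᵢ)/|Aut_𝒢(gᵢ)|, where the sum is over objects gᵢ of 𝒢, one in each isomorphism class of 𝒢 whose image F(gᵢ) is isomorphic to h. -/
open CategoryTheory

/-- The set of isomorphism classes of objects of a category. -/
abbrev PiZero (C : Type*) [Category C] := Quotient (isIsomorphicSetoid C)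

/-- The orbisum `∫_C f = ∑_{[x]} f(x)/|Aut(x)|` of a vector-valued function on
isomorphism classes. -/
noncomputable def orbisum {C : Type*} [Category C] {V : Type*} [AddCommGroup V] [Module ℚ V]
    (f : PiZero C → V) : V :=
  ∑ᶠ c : PiZero C, ((Nat.card (Aut (Quotient.out c)) : ℚ))⁻¹ • f c

/-- The push-forward `F_* f`, defined by orbisums over comma categories `(F ↓ h)`. -/
noncomputable def pushforward {C D : Type*} [Category C] [Category D] (F : C ⥤ D)
    {V : Type*} [AddCommGroup V] [Module ℚ V] (f : PiZero C → V) : PiZero D → V :=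
  fun h => orbisum (fun c : PiZero (CostructuredArrow F (Quotient.out h)) =>
    f (Quotient.mk (isIsomorphicSetoid C) (Quotient.out c).left))

/-!
Sort the isomorphism classes of `F ↓ d` by the isomorphism class of their source. The objects
over `g` are the arrows `φ : F g ⟶ d`; `Aut g` acts on them by precomposition, the orbits are
exactly the isomorphism classes of `F ↓ d` over `[g]`, and the stabilizer of `φ` is the
automorphism group of `(g, φ)`. By orbit–stabilizer the classes over `[g]` contribute
`∑ 1 / |Stab| = |F g ⟶ d| / |Aut g|`, and in a groupoid `|F g ⟶ d|` is `|Aut d|` if `F g ≅ d`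
and `0` otherwise.
-/

theorem MulAction.finsum_inv_card_stabilizer_out (G X : Type*) [Group G] [MulAction G X]
    [Finite G] [Finite X] :
    ∑ᶠ ω : MulAction.orbitRel.Quotient G X, (Nat.card (MulAction.stabilizer G ω.out) : ℚ)⁻¹ =
      Nat.card X / Nat.card G := by
  have hterm (ω : MulAction.orbitRel.Quotient G X) :
      (Nat.card (MulAction.stabilizer G ω.out) : ℚ)⁻¹ =
        Nat.card (G ⧸ MulAction.stabilizer G ω.out) / Nat.card G := by
    rw [(MulAction.stabilizer G ω.out).card_eq_card_quotient_mul_card_subgroup, Nat.cast_mul,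
      div_mul_cancel_left₀ (Nat.cast_ne_zero.mpr Nat.card_pos.ne')]
  have : Fintype (MulAction.orbitRel.Quotient G X) := Fintype.ofFinite _
  rw [finsum_congr hterm, finsum_eq_sum_of_fintype, ← Finset.sum_div,
    Nat.card_congr (MulAction.selfEquivSigmaOrbitsQuotientStabilizer G X), Nat.card_sigma,
    Nat.cast_sum]

theorem finsum_smul_comp_eq_finsum_fiberwise {α β R M : Type*} [Finite α] [Finite β]
    [Semiring R] [AddCommMonoid M] [Module R M] (p : α → β) (w : α → R) (f : β → M) :
    ∑ᶠ a, w a • f (p a) = ∑ᶠ b, (∑ᶠ a ∈ p ⁻¹' {b}, w a) • f b := by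
  classical
  have := Fintype.ofFinite α
  have := Fintype.ofFinite β
  have hfiber (b : β) : p ⁻¹' {b} = ↑(Finset.univ.filter (p · = b)) := by ext; simp
  simp_rw [hfiber, finsum_mem_coe_finset, Finset.sum_smul]
  rw [finsum_eq_sum_of_fintype, finsum_eq_sum_of_fintype, ← Finset.sum_fiberwise Finset.univ p]
  refine Finset.sum_congr rfl fun b _ => Finset.sum_congr rfl fun a ha => ?_
  rw [(Finset.mem_filter.mp ha).2]

namespace CategoryTheory.Groupoid

variable {G : Type*} [Groupoid G] {x y : G}

def homEquivAut (e : x ≅ y) : (x ⟶ y) ≃ Aut y :=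
  (e.homCongr (Iso.refl y)).trans (isoEquivHom y y).symm

theorem isEmpty_hom_of_not_iso (h : ¬Nonempty (x ≅ y)) : IsEmpty (x ⟶ y) :=
  ⟨fun φ => h ⟨(isoEquivHom x y).symm φ⟩⟩

instance finite_hom [Finite (Aut y)] : Finite (x ⟶ y) := by
  by_cases h : Nonempty (x ≅ y)
  · exact .of_equiv _ (homEquivAut h.some).symm
  · have := isEmpty_hom_of_not_iso h
    infer_instance

theorem card_hom_eq_ite [Decidable (Nonempty (x ≅ y))] :
    Nat.card (x ⟶ y) = if Nonempty (x ≅ y) then Nat.card (Aut y) else 0 := by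
  split_ifs with h
  · exact Nat.card_congr (homEquivAut h.some)
  · have := isEmpty_hom_of_not_iso h
    exact Nat.card_of_isEmpty

end CategoryTheory.Groupoid

namespace CategoryTheory.CostructuredArrow

open MulAction

variable {C D : Type*} [Category C] [Category D]

/-- The objects of `CostructuredArrow F d` over `g`. -/
abbrev HomFiber (F : C ⥤ D) (g : C) (d : D) : Type _ := F.obj g ⟶ d

variable {F : C ⥤ D} {g : C} {d : D}

instance : MulAction (Aut g) (HomFiber F g d) where
  smul ψ φ := F.map ψ.inv ≫ φ
  one_smul φ := by
    change F.map (𝟙 g) ≫ φ = φ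
    rw [F.map_id, Category.id_comp]
  mul_smul ψ χ φ := by
    change F.map (ψ.inv ≫ χ.inv) ≫ φ = F.map ψ.inv ≫ F.map χ.inv ≫ φ
    rw [F.map_comp, Category.assoc]

theorem mem_orbit_iff_nonempty_iso (φ φ' : HomFiber F g d) :
    φ ∈ orbit (Aut g) φ' ↔ Nonempty (mk φ ≅ mk φ') := by
  rw [mem_orbit_iff]
  constructor
  · rintro ⟨ψ, hψ⟩
    exact ⟨isoMk ψ.symm hψ⟩
  · rintro ⟨e⟩
    exact ⟨((proj F d).mapIso e).symm, w e.hom⟩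

def autMkEquivStabilizer (φ : HomFiber F g d) : Aut (mk φ) ≃ stabilizer (Aut g) φ where
  toFun α := ⟨((proj F d).mapIso α).symm, w α.hom⟩
  invFun ψ := isoMk (ψ : Aut g).symm ψ.2
  left_inv α := by ext; rfl
  right_inv ψ := by ext; rfl

variable (F g d) in
def orbitToPiZero : orbitRel.Quotient (Aut g) (HomFiber F g d) → PiZero (CostructuredArrow F d) :=
  _root_.Quotient.lift (fun φ => ⟦mk φ⟧) fun φ φ' h =>
    _root_.Quotient.sound ((mem_orbit_iff_nonempty_iso φ φ').mp h)

theorem orbitToPiZero_mk (φ : HomFiber F g d) : orbitToPiZero F g d ⟦φ⟧ = ⟦mk φ⟧ := rfl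

theorem orbitToPiZero_injective : Function.Injective (orbitToPiZero F g d) := by
  rintro ⟨φ⟩ ⟨φ'⟩ h
  exact _root_.Quotient.sound ((mem_orbit_iff_nonempty_iso φ φ').mpr (_root_.Quotient.exact h))

variable (F d) in
noncomputable abbrev leftIsoClass (c : PiZero (CostructuredArrow F d)) : PiZero C :=
  ⟦c.out.left⟧

theorem range_orbitToPiZero : Set.range (orbitToPiZero F g d) = leftIsoClass F d ⁻¹' {⟦g⟧} := by
  ext c
  constructor
  · rintro ⟨⟨φ⟩, rfl⟩
    obtain ⟨e⟩ := _root_.Quotient.exact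
      (_root_.Quotient.out_eq (⟦mk φ⟧ : PiZero (CostructuredArrow F d)))
    exact _root_.Quotient.sound ⟨(proj F d).mapIso e⟩
  · intro hc
    obtain ⟨e⟩ := _root_.Quotient.exact hc
    refine ⟨⟦F.map e.inv ≫ c.out.hom⟧, ?_⟩
    conv_rhs => rw [← _root_.Quotient.out_eq c]
    exact _root_.Quotient.sound ⟨isoMk e.symm⟩

theorem finsum_preimage_leftIsoClass_inv_card_aut [Finite (Aut g)] [Finite (HomFiber F g d)] :
    ∑ᶠ c ∈ leftIsoClass F d ⁻¹' {⟦g⟧}, (Nat.card (Aut c.out) : ℚ)⁻¹ =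
      Nat.card (F.obj g ⟶ d) / Nat.card (Aut g) := by
  rw [← range_orbitToPiZero, finsum_mem_range orbitToPiZero_injective,
    ← finsum_inv_card_stabilizer_out]
  refine finsum_congr fun ω => ?_
  have hω : orbitToPiZero F g d ω = ⟦mk ω.out⟧ := by
    rw [← orbitToPiZero_mk, _root_.Quotient.out_eq]
  obtain ⟨e⟩ := _root_.Quotient.exact ((_root_.Quotient.out_eq _).trans hω)
  rw [Nat.card_congr e.conjAut.toEquiv, Nat.card_congr (autMkEquivStabilizer ω.out)]

theorem finite_piZero [Finite (PiZero C)] [∀ g, Finite (HomFiber F g d)] :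
    Finite (PiZero (CostructuredArrow F d)) := by
  refine Finite.of_surjective
    (fun p : Σ b : PiZero C, orbitRel.Quotient (Aut b.out) (HomFiber F b.out d) =>
      orbitToPiZero F _ d p.2) fun c => ?_
  have hc : c ∈ Set.range (orbitToPiZero F (leftIsoClass F d c).out d) := by
    rw [range_orbitToPiZero, Set.mem_preimage, _root_.Quotient.out_eq, Set.mem_singleton_iff]
  obtain ⟨ω, hω⟩ := hc
  exact ⟨⟨_, ω⟩, hω⟩

end CategoryTheory.CostructuredArrow

open CostructuredArrow in
theorem orbisum_costructuredArrow {C D : Type*} [Groupoid C] [Groupoid D] [Finite (PiZero C)]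
    [∀ x : C, Finite (Aut x)] {V : Type*} [AddCommGroup V] [Module ℚ V]
    (F : C ⥤ D) (f : PiZero C → V) (d : D) [Finite (Aut d)] :
    orbisum (fun c : PiZero (CostructuredArrow F d) => f (leftIsoClass F d c)) =
      (Nat.card (Aut d) : ℚ) •
        ∑ᶠ c ∈ {c : PiZero C | Nonempty (F.obj c.out ≅ d)}, (Nat.card (Aut c.out) : ℚ)⁻¹ • f c := by
  classical
  have := finite_piZero (F := F) (d := d)
  calc orbisum (fun c : PiZero (CostructuredArrow F d) => f (leftIsoClass F d c))
      = ∑ᶠ b, (∑ᶠ c ∈ leftIsoClass F d ⁻¹' {b}, (Nat.card (Aut c.out) : ℚ)⁻¹) • f b :=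
        finsum_smul_comp_eq_finsum_fiberwise _ _ _
    _ = ∑ᶠ b : PiZero C, (Nat.card (F.obj b.out ⟶ d) / Nat.card (Aut b.out) : ℚ) • f b := by
        refine finsum_congr fun b => ?_
        rw [← finsum_preimage_leftIsoClass_inv_card_aut, _root_.Quotient.out_eq]
    _ = _ := by
        rw [smul_finsum_mem (Set.toFinite _), finsum_mem_def]
        refine finsum_congr fun b => ?_
        simp only [Groupoid.card_hom_eq_ite, Set.indicator_apply, Set.mem_ofPred_eq]
        split_ifs
        · rw [smul_smul, div_eq_mul_inv]
        · rw [Nat.cast_zero, zero_div, zero_smul]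

theorem pushforward_eq_general {C D : Type*} [Groupoid C] [Groupoid D]
    (hC : Finite (PiZero C)) (hCa : ∀ x : C, Finite (Aut x))
    (hDa : ∀ y : D, Finite (Aut y))
    {V : Type*} [AddCommGroup V] [Module ℚ V]
    (F : C ⥤ D) (f : PiZero C → V) (h : D) :
    pushforward F f (Quotient.mk (isIsomorphicSetoid D) h) =
      (Nat.card (Aut h) : ℚ) •
        ∑ᶠ c ∈ {c : PiZero C | Nonempty (F.obj (Quotient.out c) ≅ h)},
          (Nat.card (Aut (Quotient.out c)) : ℚ)⁻¹ • f c := by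
  obtain ⟨e⟩ := Quotient.exact (Quotient.out_eq (Quotient.mk (isIsomorphicSetoid D) h))
  have hS : {c : PiZero C | Nonempty (F.obj c.out ≅ (Quotient.mk (isIsomorphicSetoid D) h).out)} =
      {c | Nonempty (F.obj c.out ≅ h)} :=
    Set.ext fun c => ⟨fun ⟨i⟩ => ⟨i ≪≫ e⟩, fun ⟨i⟩ => ⟨i ≪≫ e.symm⟩⟩
  rw [pushforward, orbisum_costructuredArrow, Nat.card_congr e.conjAut.toEquiv, hS]

/-- The push-forward `F_* f` is given by
`(F_* f)([h]) = |Aut(h)| · ∑ f(gᵢ)/|Aut(gᵢ)|`, summing over one object `gᵢ` in each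
isomorphism class of `C` whose image under `F` is isomorphic to `h`. -/
theorem pushforward_eq {C D : Type*} [Groupoid C] [Groupoid D]
    (hC : Finite (PiZero C)) (hCa : ∀ x : C, Finite (Aut x))
    (hD : Finite (PiZero D)) (hDa : ∀ y : D, Finite (Aut y))
    {V : Type*} [AddCommGroup V] [Module ℚ V]
    (F : C ⥤ D) (f : PiZero C → V) (h : D) :
    pushforward F f (Quotient.mk (isIsomorphicSetoid D) h) =
      (Nat.card (Aut h) : ℚ) •
        ∑ᶠ c ∈ {c : PiZero C | Nonempty (F.obj (Quotient.out c) ≅ h)},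
          (Nat.card (Aut (Quotient.out c)) : ℚ)⁻¹ • f c :=
  pushforward_eq_general hC hCa hDa F f h
end

section
/- Let F: 𝒢 → ℋ be a functor between finite groupoids such that the comma category (F ↓ h) is equivalent to a discrete category for every object h of ℋ. Let LF: Fun(ℤ,𝒢) → Fun(ℤ,ℋ) be the induced functor given by composing with F. Then for every object (h, τ) of Fun(ℤ,ℋ), the comma category (LF ↓ (h,τ)) is equivalent to a discrete category, and the set π₀(LF ↓ (h,τ)) of its isomorphism classes is in bijection with the set of isomorphism classes in π₀(F ↓ h) that are fixed by the map sending the class of (g, φ: F(g) → h) to the class of (g, τ∘φ). -/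
/-!
An object of `(LF ↓ (h, τ))` is a loop `(x, σ)` in `G` with `φ : F x ⟶ h` and
`F σ ≫ φ = φ ≫ τ`, that is, an object `(x, φ)` of `(F ↓ h)` together with a morphism
`σ : (x, φ ≫ τ) ⟶ (x, φ)`. As `(F ↓ h)` is thin, `F` is faithful; hence `(LF ↓ (h, τ))` is a
thin groupoid, and evaluation at the base point is fully faithful into `(F ↓ h)`. Its essential
image consists of the objects isomorphic to their translate by `τ`, since a single such
morphism `σ` already generates a loop.
-/

open CategoryTheory

open Multiplicative

universe w

namespace PiZero

variable {C D : Type*} [Category C] [Category D]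

def map (Φ : C ⥤ D) : PiZero C → PiZero D :=
  Quotient.map Φ.obj fun _ _ ⟨e⟩ => ⟨Φ.mapIso e⟩

lemma map_eq_mk_out (Φ : C ⥤ D) (c : PiZero C) :
    map Φ c = Quotient.mk _ (Φ.obj c.out) := by
  conv_lhs => rw [← Quotient.out_eq c]
  rfl

lemma map_mk_eq_mk_iff (Φ : C ⥤ C) (X : C) :
    map Φ (Quotient.mk _ X) = Quotient.mk _ X ↔ IsIsomorphic (Φ.obj X) X :=
  Quotient.eq

lemma map_injective (Φ : C ⥤ D) [Φ.Full] [Φ.Faithful] : Function.Injective (map Φ) := by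
  rintro ⟨X⟩ ⟨Y⟩ h
  obtain ⟨e⟩ := Quotient.exact h
  exact Quotient.sound ⟨Φ.preimageIso e⟩

lemma small_of_equivalence {S : Type w} (e : C ≌ Discrete S) : Small.{w} (PiZero C) :=
  small_of_injective (map_injective e.functor)

end PiZero

noncomputable def toDiscretePiZero (C : Type*) [Category C] [IsGroupoid C] :
    C ⥤ Discrete (PiZero C) where
  obj X := ⟨Quotient.mk _ X⟩
  map f := Discrete.eqToHom (Quotient.sound ⟨asIso f⟩)

instance (C : Type*) [Category C] [Quiver.IsThin C] [IsGroupoid C] :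
    (toDiscretePiZero C).IsEquivalence where
  faithful := ⟨fun _ => Subsingleton.elim _ _⟩
  full := ⟨fun u => ⟨(Quotient.exact (Discrete.eq_of_hom u)).some.hom, Subsingleton.elim _ _⟩⟩
  essSurj := ⟨fun c => ⟨c.as.out, ⟨Discrete.eqToIso c.as.out_eq⟩⟩⟩

noncomputable def equivalenceDiscretePiZero (C : Type*) [Category C] [Quiver.IsThin C]
    [IsGroupoid C] : C ≌ Discrete (PiZero C) :=
  (toDiscretePiZero C).asEquivalence

lemma Quiver.IsThin.of_equivalence {C D : Type*} [Category C] [Category D] [Quiver.IsThin D]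
    (e : C ≌ D) : Quiver.IsThin C :=
  fun _ _ => ⟨fun _ _ => e.functor.map_injective (Subsingleton.elim _ _)⟩

instance {J C : Type*} [Category J] [Category C] [IsGroupoid C] : IsGroupoid (J ⥤ C) where
  all_isIso _ := NatIso.isIso_of_isIso_app _

lemma CategoryTheory.SingleObj.map_comp_eq_comp_map_of_ofAdd_one {C : Type*} [Category C]
    {P Q : SingleObj (Multiplicative ℤ) ⥤ C}
    (u : P.obj (SingleObj.star _) ≅ Q.obj (SingleObj.star _))
    (h : P.map (ofAdd 1) ≫ u.hom = u.hom ≫ Q.map (ofAdd 1)) (a : Multiplicative ℤ) :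
    P.map a ≫ u.hom = u.hom ≫ Q.map a := by
  let toEnd := (SingleObj.toEnd (Multiplicative ℤ)).toMonoidHom
  have hom_eq : u.conj.toMonoidHom.comp ((P.mapEnd _).comp toEnd) = (Q.mapEnd _).comp toEnd :=
    MonoidHom.ext_mint (show u.inv ≫ P.map (ofAdd 1) ≫ u.hom = Q.map (ofAdd 1) by
      rw [h, Iso.inv_hom_id_assoc])
  have conj_eq : u.inv ≫ P.map a ≫ u.hom = Q.map a := congrArg (fun φ => φ a) hom_eq
  rw [← conj_eq, Iso.hom_inv_id_assoc]

namespace CategoryTheory.CostructuredArrow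

section General

variable {C D : Type*} [Category C] [Category D]

instance [IsGroupoid C] (S : C ⥤ D) (T : D) : IsGroupoid (CostructuredArrow S T) :=
  isGroupoid_of_reflects_iso (proj S T)

lemma isThin_of_faithful [IsGroupoid D] (S : C ⥤ D) [S.Faithful] (T : D) :
    Quiver.IsThin (CostructuredArrow S T) :=
  fun _ Y => ⟨fun _ _ => hom_ext _ _ (S.map_injective ((cancel_mono Y.hom).mp (by simp)))⟩

lemma _root_.CategoryTheory.Functor.faithful_of_isThin_costructuredArrow (S : C ⥤ D)
    (h : ∀ T, Quiver.IsThin (CostructuredArrow S T)) : S.Faithful where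
  map_injective {_ Y} f g hfg := by
    have := congrArg CommaMorphism.left
      (Subsingleton.elim (α := mk (S.map f) ⟶ mk (𝟙 (S.obj Y))) (homMk f) (homMk g (by simp [hfg])))
    simpa using this

lemma mk_out_hom_comp_eq_iff {S : C ⥤ D} {T : D} (f : T ⟶ T) (c : PiZero (CostructuredArrow S T)) :
    _root_.Quotient.mk _ (mk (c.out.hom ≫ f)) = c ↔ PiZero.map (map f) c = c := by
  rw [PiZero.map_eq_mk_out]
  rfl

end General

section Evaluation

variable {J C D : Type*} [Category J] [Category C] [Category D] {F : C ⥤ D} {T : J ⥤ D}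

def evalAt (j : J) :
    CostructuredArrow ((Functor.whiskeringRight J C D).obj F) T ⥤
      CostructuredArrow F (T.obj j) where
  obj X := mk (X.hom.app j)
  map f := homMk (f.left.app j) (by simpa using congr_app (w f) j)

lemma isIsomorphic_map_evalAt_obj [IsGroupoid C] {j : J} (g : j ⟶ j)
    (X : CostructuredArrow ((Functor.whiskeringRight J C D).obj F) T) :
    IsIsomorphic ((map (T.map g)).obj ((evalAt j).obj X)) ((evalAt j).obj X) :=
  ⟨asIso (homMk (X.left.map g) (X.hom.naturality g))⟩

end Evaluation

section Loops

variable {M C D : Type*} [Monoid M] [Category C] [Category D] [IsGroupoid D] {F : C ⥤ D}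
  [F.Faithful] {T : SingleObj M ⥤ D}

instance :
    Quiver.IsThin (CostructuredArrow ((Functor.whiskeringRight (SingleObj M) C D).obj F) T) :=
  isThin_of_faithful _ _

lemma left_map_comp_eq_comp_left_map
    {X Y : CostructuredArrow ((Functor.whiskeringRight (SingleObj M) C D).obj F) T}
    (u : X.left.obj (SingleObj.star M) ⟶ Y.left.obj (SingleObj.star M))
    (hu : F.map u ≫ Y.hom.app _ = X.hom.app _) (a : M) :
    X.left.map a ≫ u = u ≫ Y.left.map a := by
  refine F.map_injective ((cancel_mono (Y.hom.app _)).mp ?_)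
  have hX := X.hom.naturality (X := SingleObj.star M) (Y := SingleObj.star M) a
  have hY := Y.hom.naturality (X := SingleObj.star M) (Y := SingleObj.star M) a
  simp only [Functor.whiskeringRight_obj_obj, Functor.comp_map] at hX hY
  rw [F.map_comp, F.map_comp, Category.assoc, Category.assoc, hu, hY, reassoc_of% hu, hX]

instance : (evalAt (T := T) (F := F) (SingleObj.star M)).Full where
  map_surjective f :=
    ⟨homMk (SingleObj.natTrans f.left (left_map_comp_eq_comp_left_map f.left (w f)))
      (by ext; exact w f), by ext; rfl⟩

instance : (evalAt (T := T) (F := F) (SingleObj.star M)).Faithful where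
  map_injective _ := Subsingleton.elim _ _

end Loops

section IntegerLoops

variable {G H : Type*} [Groupoid G] [Groupoid H] {F : G ⥤ H} {T : SingleObj (Multiplicative ℤ) ⥤ H}

lemma exists_evalAt_obj_eq (Y : CostructuredArrow F (T.obj (SingleObj.star _)))
    (e : (map (T.map (ofAdd 1))).obj Y ⟶ Y) :
    ∃ X, (evalAt (F := F) (SingleObj.star _)).obj X = Y := by
  let loop := SingleObj.functor (zpowersHom (End Y.left) e.left)
  have he : F.map e.left ≫ Y.hom = Y.hom ≫ T.map (ofAdd 1) := w e
  -- `asIso Y.hom` would need instance search to see `(loop ⋙ F).obj _` as `F.obj Y.left`.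
  have hloop := SingleObj.map_comp_eq_comp_map_of_ofAdd_one (P := loop ⋙ F) (Q := T)
    (Groupoid.isoEquivHom _ _ |>.symm Y.hom)
    (by simp only [loop, Functor.comp_map, SingleObj.functor_map, zpowersHom_apply, toAdd_ofAdd,
      zpow_one]; exact he)
  exact ⟨mk (Y := loop) (SingleObj.natTrans Y.hom hloop), (eq_mk Y).symm⟩

variable (F T) [F.Faithful]

noncomputable def piZeroEquivFixedPoints :
    PiZero (CostructuredArrow
        ((Functor.whiskeringRight (SingleObj (Multiplicative ℤ)) G H).obj F) T) ≃
      {c : PiZero (CostructuredArrow F (T.obj (SingleObj.star _))) //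
        PiZero.map (map (T.map (ofAdd 1))) c = c} := by
  refine Equiv.ofBijective (fun q => ⟨PiZero.map (evalAt _) q, ?_⟩)
    ⟨fun q q' h => PiZero.map_injective _ (congrArg Subtype.val h), ?_⟩
  · induction q using Quotient.inductionOn with
    | h X => exact (PiZero.map_mk_eq_mk_iff _ _).mpr (isIsomorphic_map_evalAt_obj _ X)
  · rintro ⟨c, hc⟩
    induction c using Quotient.inductionOn with
    | h Y =>
      obtain ⟨X, hX⟩ := exists_evalAt_obj_eq Y ((PiZero.map_mk_eq_mk_iff _ Y).mp hc).some.hom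
      exact ⟨_root_.Quotient.mk _ X, Subtype.ext (congrArg (_root_.Quotient.mk _) hX)⟩

end IntegerLoops

end CategoryTheory.CostructuredArrow

open CostructuredArrow in
theorem comma_of_free_loops_discrete_general {G H : Type} [Groupoid G] [Groupoid H]
    (F : G ⥤ H)
    (hdisc : ∀ h : H, ∃ S : Type, Nonempty (CostructuredArrow F h ≌ Discrete S))
    (T : SingleObj (Multiplicative ℤ) ⥤ H) :
    (∃ S : Type,
        Nonempty
          (CostructuredArrow ((Functor.whiskeringRight (SingleObj (Multiplicative ℤ)) G H).obj F) T ≌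
            Discrete S)) ∧
    Nonempty
      (PiZero (CostructuredArrow ((Functor.whiskeringRight (SingleObj (Multiplicative ℤ)) G H).obj F) T) ≃
        {c : PiZero (CostructuredArrow F (T.obj (SingleObj.star (Multiplicative ℤ)))) //
          Quotient.mk (isIsomorphicSetoid _)
              (CostructuredArrow.mk ((Quotient.out c).hom ≫
                T.map (show SingleObj.star (Multiplicative ℤ) ⟶
                    SingleObj.star (Multiplicative ℤ) from Multiplicative.ofAdd 1))) = c}) := by
  have : F.Faithful := F.faithful_of_isThin_costructuredArrow fun h =>
    let ⟨_, ⟨e⟩⟩ := hdisc h; Quiver.IsThin.of_equivalence e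
  -- Objects of comma categories live in the hom universes of `G` and `H`, hence `Shrink`.
  have (h : H) : Small.{0} (PiZero (CostructuredArrow F h)) :=
    let ⟨_, ⟨e⟩⟩ := hdisc h; PiZero.small_of_equivalence e
  let Θ := (piZeroEquivFixedPoints F T).trans
    (Equiv.subtypeEquivRight fun c => (mk_out_hom_comp_eq_iff _ c).symm)
  have : Small.{0} (PiZero (CostructuredArrow _ T)) := small_map Θ
  exact ⟨⟨_, ⟨(equivalenceDiscretePiZero _).trans (Discrete.equivalence (equivShrink _))⟩⟩, ⟨Θ⟩⟩

/-- Lemma on free loop groupoids: if `F : G ⥤ H` is a functor between finite groupoids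
all of whose comma categories `(F ↓ h)` are equivalent to discrete categories, then for
the induced functor `LF : Fun(ℤ,G) ⥤ Fun(ℤ,H)` (given by postcomposition with `F`) the
comma category `(LF ↓ (h,τ))` over any object `(h, τ)` is equivalent to a discrete
category, and its set of isomorphism classes is in bijection with the set of classes in
`π₀(F ↓ h)` fixed by the map `[(g, φ : F(g) → h)] ↦ [(g, τ ∘ φ)]`. -/
theorem comma_of_free_loops_discrete {G H : Type} [Groupoid G] [Groupoid H]
    (hG : Finite (PiZero G)) (hGa : ∀ x : G, Finite (Aut x))
    (hH : Finite (PiZero H)) (hHa : ∀ y : H, Finite (Aut y))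
    (F : G ⥤ H)
    (hdisc : ∀ h : H, ∃ S : Type, Nonempty (CostructuredArrow F h ≌ Discrete S))
    (T : SingleObj (Multiplicative ℤ) ⥤ H) :
    (∃ S : Type,
        Nonempty
          (CostructuredArrow ((Functor.whiskeringRight (SingleObj (Multiplicative ℤ)) G H).obj F) T ≌
            Discrete S)) ∧
    Nonempty
      (PiZero (CostructuredArrow ((Functor.whiskeringRight (SingleObj (Multiplicative ℤ)) G H).obj F) T) ≃
        {c : PiZero (CostructuredArrow F (T.obj (SingleObj.star (Multiplicative ℤ)))) //
          Quotient.mk (isIsomorphicSetoid _)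
              (CostructuredArrow.mk ((Quotient.out c).hom ≫
                T.map (show SingleObj.star (Multiplicative ℤ) ⟶
                    SingleObj.star (Multiplicative ℤ) from Multiplicative.ofAdd 1))) = c}) :=
  comma_of_free_loops_discrete_general F hdisc T
end

section
/- Let g ≥ 0 and n ≥ 1 be integers with 2g − 2 + (n−1) > 0. Let S_n be a finite set of stable, connected, genus g, n-marked graphs containing exactly one representative from each isomorphism class of such graphs, and let S_{n−1} be such a set for (n−1)-marked graphs. Then ∑_{G ∈ S_n} (−1)^{|E(G)|}/|Aut(G)| = (2 − g − n) · ∑_{G ∈ S_{n−1}} (−1)^{|E(G)|}/|Aut(G)|. -/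
/-- A graph with `n` (not necessarily distinct) marked points: finite sets of
vertices `V` and half-edges `H`, a fixed-point-free involution `s` on half-edges,
an attaching map `r : H → V`, and a marking `m : Fin n → V`. -/
structure MarkedGraph (n : ℕ) where
  V : Type
  H : Type
  finV : Finite V
  finH : Finite H
  s : H → H
  s_invol : ∀ x, s (s x) = x
  s_ne : ∀ x, s x ≠ x
  r : H → V
  m : Fin n → V

namespace MarkedGraph

variable {n : ℕ}

/-- The number of edges: since `s` is a fixed-point-free involution on the half-edges,
the set of edges `E = H/(x ∼ s x)` has cardinality `|H|/2`. -/
noncomputable def numEdges (G : MarkedGraph n) : ℕ := Nat.card G.H / 2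

/-- `G` has genus `g` if `|V| - |E| = 1 - g`. -/
def IsGenus (G : MarkedGraph n) (g : ℕ) : Prop :=
  Nat.card G.V + g = 1 + G.numEdges

/-- Two vertices are adjacent if some edge joins them. -/
def Adj (G : MarkedGraph n) (v w : G.V) : Prop :=
  ∃ x : G.H, G.r x = v ∧ G.r (G.s x) = w

/-- `G` is connected: there is a vertex, and any two vertices are joined by a path
of edges. -/
def Connected (G : MarkedGraph n) : Prop :=
  Nonempty G.V ∧ ∀ v w : G.V, Relation.ReflTransGen G.Adj v w

/-- `G` is stable: every vertex carries at least three half-edges or markings. -/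
def Stable (G : MarkedGraph n) : Prop :=
  ∀ v : G.V, 3 ≤ Nat.card {x : G.H // G.r x = v} + Nat.card {i : Fin n // G.m i = v}

/-- An isomorphism of `n`-marked graphs. -/
structure Iso (G G' : MarkedGraph n) where
  tV : G.V ≃ G'.V
  tH : G.H ≃ G'.H
  comm_s : ∀ x, tH (G.s x) = G'.s (tH x)
  comm_r : ∀ x, tV (G.r x) = G'.r (tH x)
  comm_m : ∀ i, tV (G.m i) = G'.m i

end MarkedGraph

/-! Double counting. For an `(n - 1)`-marked `G'` and an `n`-marked `G`, `extensionCount G' G`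
counts with signs the ways of getting `G` from `G'` by adding the last marking: at a vertex (`+`),
on a new vertex subdividing an edge (`-`, for the extra edge), or on a new vertex that takes over
a marking `i` and is joined by a new edge to where `i` was (`-`). Weighted by `1 / |Aut G|`, the
sum over all `G` of the placements into a fixed `G'` is `|V| - |E| - (n - 1) = 2 - g - n`.
Conversely a stable `G` arises in exactly one of the three ways, according to whether its last
vertex stays stable without the marking, lies on an edge with nothing else, or carries one
half-edge and one other marking; `2g - 2 + (n - 1) > 0` rules out the degenerate one-vertex
cases. Contracting the last vertex identifies the isomorphisms, and the sum over `G'` weighted by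
`(-1)^|E(G')| / |Aut G'|` returns `(-1)^|E(G)|`. -/

theorem Nat.card_subtype_eq_sum {α : Type*} [Fintype α] (p : α → Prop) [DecidablePred p] :
    Nat.card {x // p x} = ∑ x, if p x then 1 else 0 := by
  rw [Nat.card_eq_fintype_card, Fintype.card_subtype, Finset.card_filter]

theorem Nat.even_card_of_involutive {α : Type*} [Finite α] {f : α → α}
    (hf : Function.Involutive f) (hne : ∀ a, f a ≠ a) : Even (Nat.card α) := by
  classical
  cases nonempty_fintype α
  let e : Function.End α := f
  have hsq : e ^ 2 ^ 1 = 1 := funext hf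
  have hmod := Equiv.Perm.card_fixedPoints_modEq (p := 2) (n := 1) (f := e) hsq
  have hfix : Fintype.card (Function.fixedPoints e) = 0 :=
    Fintype.card_eq_zero_iff.mpr ⟨fun ⟨a, ha⟩ => hne a ha⟩
  rw [hfix] at hmod
  rw [Nat.card_eq_fintype_card]
  exact Nat.even_iff.mpr hmod

open Classical in
theorem Nat.card_subtype_fin_succ {m : ℕ} (p : Fin (m + 1) → Prop) :
    Nat.card {i // p i} =
      Nat.card {j : Fin m // p j.castSucc} + if p (Fin.last m) then 1 else 0 := by
  simp only [Nat.card_subtype_eq_sum, Fin.sum_univ_castSucc]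

def Equiv.boolEquivOfPair {α : Type*} {p : α → Prop} {a b : α} (hab : a ≠ b)
    (hp : ∀ x, p x ↔ x = a ∨ x = b) [DecidableEq α] : Bool ≃ {x // p x} where
  toFun c := bif c then ⟨a, (hp a).2 (.inl rfl)⟩ else ⟨b, (hp b).2 (.inr rfl)⟩
  invFun x := decide (x.1 = a)
  left_inv c := by cases c <;> simp [hab.symm]
  right_inv x := by
    obtain ⟨x, hx⟩ := x
    rcases (hp x).1 hx with rfl | rfl <;> simp [hab.symm]

@[simp] theorem Equiv.boolEquivOfPair_true {α : Type*} {p : α → Prop} {a b : α} (hab : a ≠ b)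
    (hp : ∀ x, p x ↔ x = a ∨ x = b) [DecidableEq α] :
    (Equiv.boolEquivOfPair hab hp true).1 = a := rfl

@[simp] theorem Equiv.boolEquivOfPair_false {α : Type*} {p : α → Prop} {a b : α} (hab : a ≠ b)
    (hp : ∀ x, p x ↔ x = a ∨ x = b) [DecidableEq α] :
    (Equiv.boolEquivOfPair hab hp false).1 = b := rfl

namespace MarkedGraph

variable {n m : ℕ}

instance (G : MarkedGraph n) : Finite G.V := G.finV
instance (G : MarkedGraph n) : Finite G.H := G.finH

theorem s_involutive (G : MarkedGraph n) : Function.Involutive G.s := G.s_invol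

theorem even_card_H (G : MarkedGraph n) : Even (Nat.card G.H) :=
  Nat.even_card_of_involutive G.s_involutive G.s_ne

theorem Adj.symm {G : MarkedGraph n} {v w : G.V} (h : G.Adj v w) : G.Adj w v := by
  obtain ⟨x, rfl, rfl⟩ := h
  exact ⟨G.s x, rfl, by rw [G.s_invol]⟩

instance (G : MarkedGraph n) : Std.Symm G.Adj := ⟨fun _ _ => Adj.symm⟩

theorem Connected.of_map {k : ℕ} {G : MarkedGraph n} {G' : MarkedGraph k} (hG : G.Connected)
    (f : G.V → G'.V) (hadj : ∀ v w, G.Adj v w → Relation.ReflTransGen G'.Adj (f v) (f w))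
    (hreach : ∀ w, ∃ v, Relation.ReflTransGen G'.Adj (f v) w) : G'.Connected := by
  refine ⟨hG.1.map f, fun w₁ w₂ => ?_⟩
  obtain ⟨v₁, h₁⟩ := hreach w₁
  obtain ⟨v₂, h₂⟩ := hreach w₂
  exact (Std.Symm.symm _ _ h₁).trans (((hG.2 v₁ v₂).lift' f hadj).trans h₂)

noncomputable def degree (G : MarkedGraph n) (v : G.V) : ℕ := Nat.card {h : G.H // G.r h = v}

noncomputable def markCount (G : MarkedGraph n) (v : G.V) : ℕ := Nat.card {i : Fin n // G.m i = v}

namespace Iso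

variable {G G₁ G₂ G₃ : MarkedGraph n}

@[ext]
theorem ext {ψ χ : Iso G₁ G₂} (hV : ψ.tV = χ.tV) (hH : ψ.tH = χ.tH) : ψ = χ := by
  cases ψ; cases χ; simp_all

def refl (G : MarkedGraph n) : Iso G G :=
  ⟨Equiv.refl _, Equiv.refl _, fun _ => rfl, fun _ => rfl, fun _ => rfl⟩

def symm (ψ : Iso G₁ G₂) : Iso G₂ G₁ where
  tV := ψ.tV.symm
  tH := ψ.tH.symm
  comm_s x := ψ.tH.injective (by simp [ψ.comm_s])
  comm_r x := ψ.tV.injective (by simp [ψ.comm_r])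
  comm_m i := ψ.tV.injective (by simp [ψ.comm_m])

def trans (ψ : Iso G₁ G₂) (χ : Iso G₂ G₃) : Iso G₁ G₃ where
  tV := ψ.tV.trans χ.tV
  tH := ψ.tH.trans χ.tH
  comm_s x := by simp [ψ.comm_s, χ.comm_s]
  comm_r x := by simp [ψ.comm_r, χ.comm_r]
  comm_m i := by simp [ψ.comm_m, χ.comm_m]

instance : Finite (Iso G₁ G₂) :=
  Finite.of_injective (fun ψ => (ψ.tV, ψ.tH))
    (fun _ _ h => ext (congrArg Prod.fst h) (congrArg Prod.snd h))

theorem card_aut_pos (G : MarkedGraph n) : 0 < Nat.card (Iso G G) :=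
  Nat.card_pos_iff.mpr ⟨⟨refl G⟩, inferInstance⟩

theorem card_comm (G₁ G₂ : MarkedGraph n) : Nat.card (Iso G₁ G₂) = Nat.card (Iso G₂ G₁) :=
  Nat.card_congr ⟨symm, symm, fun _ => rfl, fun _ => rfl⟩

theorem card_eq_card_aut (ψ : Iso G₁ G₂) : Nat.card (Iso G₁ G₂) = Nat.card (Iso G₂ G₂) :=
  Nat.card_congr ⟨ψ.symm.trans, ψ.trans, fun _ => by ext <;> simp [symm, trans],
    fun _ => by ext <;> simp [symm, trans]⟩

theorem numEdges_eq (ψ : Iso G₁ G₂) : G₁.numEdges = G₂.numEdges := by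
  rw [numEdges, numEdges, Nat.card_congr ψ.tH]

theorem isGenus {g : ℕ} (ψ : Iso G₁ G₂) (h : G₁.IsGenus g) : G₂.IsGenus g := by
  rwa [IsGenus, ← Nat.card_congr ψ.tV, ← ψ.numEdges_eq]

theorem degree_eq (ψ : Iso G₁ G₂) (v : G₁.V) : G₂.degree (ψ.tV v) = G₁.degree v :=
  Nat.card_congr (ψ.tH.subtypeEquiv fun x => by rw [← ψ.comm_r, ψ.tV.apply_eq_iff_eq]).symm

theorem markCount_eq (ψ : Iso G₁ G₂) (v : G₁.V) : G₂.markCount (ψ.tV v) = G₁.markCount v :=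
  Nat.card_congr ((Equiv.refl _).subtypeEquiv fun i => by
    rw [Equiv.refl_apply, ← ψ.comm_m, ψ.tV.apply_eq_iff_eq]).symm

theorem stable (ψ : Iso G₁ G₂) (h : G₁.Stable) : G₂.Stable := fun v => by
  have : 3 ≤ G₁.degree (ψ.tV.symm v) + G₁.markCount (ψ.tV.symm v) := h _
  rwa [← ψ.degree_eq, ← ψ.markCount_eq, Equiv.apply_symm_apply] at this

theorem connected (ψ : Iso G₁ G₂) (h : G₁.Connected) : G₂.Connected :=
  h.of_map ψ.tV (fun _ _ ⟨x, hx, hsx⟩ => .single ⟨ψ.tH x, by rw [← ψ.comm_r, hx],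
    by rw [← ψ.comm_s, ← ψ.comm_r, hsx]⟩) fun w => ⟨ψ.tV.symm w, by rw [Equiv.apply_symm_apply]⟩

end Iso

def lastVertex (G : MarkedGraph (m + 1)) : G.V := G.m (Fin.last m)

theorem Iso.tV_lastVertex {G₁ G₂ : MarkedGraph (m + 1)} (ψ : Iso G₁ G₂) :
    ψ.tV G₁.lastVertex = G₂.lastVertex :=
  ψ.comm_m _

abbrev forgetLast (G : MarkedGraph (m + 1)) : MarkedGraph m :=
  { G with m := fun j => G.m j.castSucc }

abbrev markAt (G : MarkedGraph m) (v : G.V) : MarkedGraph (m + 1) :=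
  { G with m := Fin.snoc G.m v }

open Classical in
theorem markCount_eq_forgetLast (G : MarkedGraph (m + 1)) (v : G.V) :
    G.markCount v = (forgetLast G).markCount v + if G.lastVertex = v then 1 else 0 := by
  rw [markCount, Nat.card_subtype_fin_succ]
  rfl

open Classical in
theorem markCount_markAt (G : MarkedGraph m) (v w : G.V) :
    (markAt G v).markCount w = G.markCount w + if v = w then 1 else 0 := by
  rw [markCount, Nat.card_subtype_fin_succ]
  simp [markCount]

theorem stable_forgetLast {G : MarkedGraph (m + 1)} (hG : G.Stable)
    (hlast : 4 ≤ G.degree G.lastVertex + G.markCount G.lastVertex) : (forgetLast G).Stable := by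
  intro w
  have hw : 3 ≤ G.degree w + G.markCount w := hG w
  change 3 ≤ G.degree w + (forgetLast G).markCount w
  rw [markCount_eq_forgetLast] at hw hlast
  split_ifs at hw with h
  · subst h; simp at hlast; omega
  · omega

theorem stable_markAt {G : MarkedGraph m} (hG : G.Stable) (v : G.V) : (markAt G v).Stable := by
  intro w
  have hw : 3 ≤ G.degree w + G.markCount w := hG w
  change 3 ≤ G.degree w + (markAt G v).markCount w
  rw [markCount_markAt]
  omega

theorem valence_markAt_lastVertex {G : MarkedGraph m} (hG : G.Stable) (v : G.V) :
    4 ≤ (markAt G v).degree (markAt G v).lastVertex +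
      (markAt G v).markCount (markAt G v).lastVertex := by
  have hv : 3 ≤ G.degree v + G.markCount v := hG v
  have hlast : (markAt G v).lastVertex = v := by simp [lastVertex]
  rw [hlast, markCount_markAt, if_pos rfl]
  change 4 ≤ G.degree v + _
  omega

theorem card_sigma_iso_markAt (G' : MarkedGraph m) (G : MarkedGraph (m + 1)) :
    Nat.card ((v : G'.V) × Iso (markAt G' v) G) = Nat.card (Iso G' (forgetLast G)) := by
  let restrict (p : (v : G'.V) × Iso (markAt G' v) G) : Iso G' (forgetLast G) :=
    ⟨p.2.tV, p.2.tH, p.2.comm_s, p.2.comm_r, fun j => by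
      simpa using p.2.comm_m j.castSucc⟩
  let extend (δ : Iso G' (forgetLast G)) : Iso (markAt G' (δ.tV.symm G.lastVertex)) G :=
    ⟨δ.tV, δ.tH, δ.comm_s, δ.comm_r,
      Fin.lastCases (by simp [lastVertex]) fun j => by simpa using δ.comm_m j⟩
  refine Nat.card_eq_of_bijective restrict ⟨?_, fun δ => ⟨⟨_, extend δ⟩, rfl⟩⟩
  rintro ⟨v, ψ⟩ ⟨w, χ⟩ h
  have hV : ψ.tV = χ.tV := congrArg Iso.tV h
  have hv : ψ.tV v = G.lastVertex := by simpa [lastVertex] using ψ.comm_m (Fin.last m)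
  have hw : χ.tV w = G.lastVertex := by simpa [lastVertex] using χ.comm_m (Fin.last m)
  obtain rfl : v = w := ψ.tV.injective (by rw [hv, hV, hw])
  exact congrArg (Sigma.mk v) (Iso.ext hV (congrArg (fun δ => δ.tH) h))

open Classical in
/-- The edge of `x` subdivided by a new vertex `none` carrying the last marking: the new
half-edges `inr true` and `inr false` are glued to `x` and to `G.s x`. -/
noncomputable abbrev subdivide (G : MarkedGraph m) (x : G.H) : MarkedGraph (m + 1) where
  V := Option G.V
  H := G.H ⊕ Bool
  finV := inferInstance
  finH := inferInstance
  s
    | .inl y => if y = x then .inr true else if y = G.s x then .inr false else .inl (G.s y)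
    | .inr true => .inl x
    | .inr false => .inl (G.s x)
  s_invol := by
    rintro (y | _ | _)
    · by_cases h₁ : y = x
      · simp [h₁]
      by_cases h₂ : y = G.s x
      · simp [h₂, G.s_ne x]
      have h₃ : G.s y ≠ x := fun h => h₂ (by rw [← h, G.s_invol])
      have h₄ : G.s y ≠ G.s x := fun h => h₁ (G.s_involutive.injective h)
      simp [h₁, h₂, h₃, h₄, G.s_invol]
    · simp [G.s_ne x]
    · simp
  s_ne := by
    rintro (y | _ | _)
    · by_cases h₁ : y = x
      · simp [h₁]
      by_cases h₂ : y = G.s x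
      · subst h₂; simp [G.s_ne x]
      simpa [h₁, h₂] using G.s_ne y
    all_goals simp
  r
    | .inl y => some (G.r y)
    | .inr _ => none
  m := Fin.snoc (fun j => some (G.m j)) none

/-- The marking `i` moved, together with the last marking, to a new vertex `none` that is
joined to its old position by a new edge `{inr true, inr false}`. -/
abbrev splitOff (G : MarkedGraph m) (i : Fin m) : MarkedGraph (m + 1) where
  V := Option G.V
  H := G.H ⊕ Bool
  finV := inferInstance
  finH := inferInstance
  s
    | .inl y => .inl (G.s y)
    | .inr b => .inr !b
  s_invol := by rintro (y | b) <;> simp [G.s_invol]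
  s_ne := by rintro (y | b) <;> simp [G.s_ne]
  r
    | .inl y => some (G.r y)
    | .inr true => none
    | .inr false => some (G.m i)
  m := Fin.snoc (fun j => if j = i then none else some (G.m j)) none

section Subdivide

variable (G : MarkedGraph m) (x : G.H)

@[simp] theorem subdivide_lastVertex : (subdivide G x).lastVertex = none := by
  simp [subdivide, lastVertex]

theorem numEdges_subdivide : (subdivide G x).numEdges = G.numEdges + 1 := by
  have : Nat.card (subdivide G x).H = Nat.card G.H + 2 := by
    simp [Nat.card_sum]
  rw [numEdges, numEdges, this, Nat.add_div_right _ two_pos]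

theorem isGenus_subdivide_iff {g : ℕ} : (subdivide G x).IsGenus g ↔ G.IsGenus g := by
  have : Nat.card (subdivide G x).V = Nat.card G.V + 1 := Finite.card_option
  rw [IsGenus, IsGenus, numEdges_subdivide, this]
  omega

theorem degree_subdivide_some (w : G.V) : (subdivide G x).degree (some w) = G.degree w := by
  have := Fintype.ofFinite G.H
  classical
  rw [degree, degree, Nat.card_subtype_eq_sum, Nat.card_subtype_eq_sum, Fintype.sum_sum_type]
  simp

theorem markCount_subdivide_some (w : G.V) :
    (subdivide G x).markCount (some w) = G.markCount w := by
  classical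
  rw [markCount, Nat.card_subtype_fin_succ]
  simp [markCount, subdivide]

theorem degree_subdivide_none : (subdivide G x).degree none = 2 := by
  have := Fintype.ofFinite G.H
  classical
  rw [degree, Nat.card_subtype_eq_sum, Fintype.sum_sum_type]
  simp

theorem markCount_subdivide_none : (subdivide G x).markCount none = 1 := by
  classical
  rw [markCount, Nat.card_subtype_fin_succ]
  simp [subdivide]

theorem stable_subdivide_iff : (subdivide G x).Stable ↔ G.Stable := by
  refine ⟨fun h w => ?_, fun h => ?_⟩
  · have := h (some w)
    rwa [← degree, ← markCount, degree_subdivide_some, markCount_subdivide_some] at this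
  · rintro (_ | w)
    · change 3 ≤ degree _ _ + markCount _ _
      rw [degree_subdivide_none, markCount_subdivide_none]
    · change 3 ≤ degree _ _ + markCount _ _
      rw [degree_subdivide_some, markCount_subdivide_some]
      exact h w

theorem connected_subdivide {G : MarkedGraph m} (hG : G.Connected) (x : G.H) :
    (subdivide G x).Connected := by
  have hx : (subdivide G x).Adj (some (G.r x)) none := ⟨.inl x, rfl, by simp⟩
  have hsx : (subdivide G x).Adj none (some (G.r (G.s x))) := ⟨.inr false, rfl, rfl⟩
  refine hG.of_map some ?_ fun w => ?_
  · rintro _ _ ⟨y, rfl, rfl⟩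
    by_cases h₁ : y = x
    · subst h₁
      exact .tail (.single hx) hsx
    by_cases h₂ : y = G.s x
    · subst h₂
      rw [G.s_invol]
      exact .tail (.single hsx.symm) hx.symm
    exact .single ⟨.inl y, rfl, by simp [h₁, h₂]⟩
  · cases w with
    | none => exact ⟨G.r x, .single hx⟩
    | some w => exact ⟨w, .refl⟩

theorem connected_of_connected_subdivide {G : MarkedGraph m} {x : G.H}
    (h : (subdivide G x).Connected) : G.Connected := by
  refine h.of_map (fun o => o.elim (G.r x) id) ?_ fun w => ⟨some w, .refl⟩
  rintro _ _ ⟨y | _ | _, rfl, rfl⟩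
  · by_cases h₁ : y = x
    · simp [h₁, Relation.ReflTransGen.refl]
    by_cases h₂ : y = G.s x
    · subst h₂
      exact .single ⟨G.s x, by simp [h₁, G.s_invol]⟩
    exact .single ⟨y, by simp [h₁, h₂]⟩
  · exact .single ⟨x, by simp⟩
  · simp [Relation.ReflTransGen.refl]

end Subdivide

section SplitOff

variable (G : MarkedGraph m) (i : Fin m)

@[simp] theorem splitOff_lastVertex : (splitOff G i).lastVertex = none := by
  simp [splitOff, lastVertex]

theorem numEdges_splitOff : (splitOff G i).numEdges = G.numEdges + 1 := by
  have : Nat.card (splitOff G i).H = Nat.card G.H + 2 := by simp [Nat.card_sum]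
  rw [numEdges, numEdges, this, Nat.add_div_right _ two_pos]

theorem isGenus_splitOff_iff {g : ℕ} : (splitOff G i).IsGenus g ↔ G.IsGenus g := by
  have : Nat.card (splitOff G i).V = Nat.card G.V + 1 := Finite.card_option
  rw [IsGenus, IsGenus, numEdges_splitOff, this]
  omega

open Classical in
theorem degree_splitOff_some (w : G.V) :
    (splitOff G i).degree (some w) = G.degree w + if G.m i = w then 1 else 0 := by
  have := Fintype.ofFinite G.H
  rw [degree, degree, Nat.card_subtype_eq_sum, Nat.card_subtype_eq_sum, Fintype.sum_sum_type,
    Fintype.sum_bool]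
  simp

open Classical in
theorem markCount_splitOff_some (w : G.V) :
    (splitOff G i).markCount (some w) + (if G.m i = w then 1 else 0) = G.markCount w := by
  rw [markCount, Nat.card_subtype_fin_succ, markCount, Nat.card_subtype_eq_sum,
    Nat.card_subtype_eq_sum, ← Finset.add_sum_erase _ _ (Finset.mem_univ i),
    ← Finset.add_sum_erase _ _ (Finset.mem_univ i)]
  have hrest : ∀ j ∈ Finset.univ.erase i,
      (if (splitOff G i).m j.castSucc = some w then 1 else 0) =
        if G.m j = w then 1 else 0 := fun j hj => by
    simp [Finset.ne_of_mem_erase hj]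
  rw [Finset.sum_congr rfl hrest]
  simp
  omega

theorem degree_splitOff_none : (splitOff G i).degree none = 1 := by
  have := Fintype.ofFinite G.H
  classical
  rw [degree, Nat.card_subtype_eq_sum, Fintype.sum_sum_type, Fintype.sum_bool]
  simp

theorem markCount_splitOff_none : (splitOff G i).markCount none = 2 := by
  classical
  rw [markCount, Nat.card_subtype_fin_succ]
  simp

theorem stable_splitOff_iff : (splitOff G i).Stable ↔ G.Stable := by
  have hsome (w : G.V) : (splitOff G i).degree (some w) + (splitOff G i).markCount (some w) =
      G.degree w + G.markCount w := by
    rw [degree_splitOff_some, ← markCount_splitOff_some G i w]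
    ring
  refine ⟨fun h w => ?_, fun h => ?_⟩
  · have : 3 ≤ _ := h (some w)
    rwa [← degree, ← markCount, hsome] at this
  · rintro (_ | w)
    · change 3 ≤ degree _ _ + markCount _ _
      rw [degree_splitOff_none, markCount_splitOff_none]
    · change 3 ≤ degree _ _ + markCount _ _
      rw [hsome]
      exact h w

theorem connected_splitOff {G : MarkedGraph m} (hG : G.Connected) (i : Fin m) :
    (splitOff G i).Connected := by
  have hi : (splitOff G i).Adj (some (G.m i)) none := ⟨.inr false, rfl, rfl⟩
  refine hG.of_map some (fun _ _ ⟨y, hy, hsy⟩ => .single ⟨.inl y, by simp [hy, hsy]⟩)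
    fun w => ?_
  cases w with
  | none => exact ⟨G.m i, .single hi⟩
  | some w => exact ⟨w, .refl⟩

theorem connected_of_connected_splitOff {G : MarkedGraph m} {i : Fin m}
    (h : (splitOff G i).Connected) : G.Connected := by
  refine h.of_map (fun o => o.elim (G.m i) id) ?_ fun w => ⟨some w, .refl⟩
  rintro _ _ ⟨y | _ | _, rfl, rfl⟩
  · exact .single ⟨y, by simp⟩
  all_goals simp [Relation.ReflTransGen.refl]

end SplitOff

structure SubdivisionData (G : MarkedGraph (m + 1)) where
  h₁ : G.H
  h₂ : G.H
  ne : h₁ ≠ h₂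
  r_eq_iff : ∀ h, G.r h = G.lastVertex ↔ h = h₁ ∨ h = h₂
  s_ne : G.s h₁ ≠ h₂
  m_ne : ∀ j : Fin m, G.m j.castSucc ≠ G.lastVertex

namespace SubdivisionData

variable {G : MarkedGraph (m + 1)} (d : SubdivisionData G)

open Classical in
noncomputable def other (h : G.H) : G.H := if h = d.h₁ then d.h₂ else d.h₁

theorem r_other (h : G.H) : G.r (d.other h) = G.lastVertex := by
  unfold other
  split_ifs <;> simp [d.r_eq_iff]

theorem r_eq_iff_of_r_eq {a : G.H} (ha : G.r a = G.lastVertex) (h : G.H) :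
    G.r h = G.lastVertex ↔ h = a ∨ h = d.other a := by
  rw [d.r_eq_iff]
  rcases (d.r_eq_iff a).1 ha with rfl | rfl <;> simp [other, d.ne.symm, or_comm]

theorem other_ne {a : G.H} (ha : G.r a = G.lastVertex) : d.other a ≠ a := by
  unfold other
  rcases (d.r_eq_iff a).1 ha with rfl | rfl <;> simp [d.ne, d.ne.symm]

theorem other_other {a : G.H} (ha : G.r a = G.lastVertex) : d.other (d.other a) = a := by
  unfold other
  rcases (d.r_eq_iff a).1 ha with rfl | rfl <;> simp [d.ne.symm]

theorem other_eq_of_ne {a b : G.H} (ha : G.r a = G.lastVertex) (hb : G.r b = G.lastVertex)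
    (hab : b ≠ a) : d.other a = b :=
  ((d.r_eq_iff_of_r_eq ha b).1 hb).resolve_left hab |>.symm

theorem r_s_ne (d : SubdivisionData G) {a : G.H} (ha : G.r a = G.lastVertex) :
    G.r (G.s a) ≠ G.lastVertex := by
  intro hsa
  rcases (d.r_eq_iff a).1 ha with h | h <;> rcases (d.r_eq_iff _).1 hsa with h' | h' <;>
    subst h
  · exact G.s_ne _ h'
  · exact d.s_ne h'
  · exact d.s_ne (by rw [← h', G.s_invol])
  · exact G.s_ne _ h'

end SubdivisionData

open Classical in
/-- Undo the subdivision: delete the last vertex and glue its two edges into one. -/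
noncomputable abbrev unsubdivide (G : MarkedGraph (m + 1)) (d : SubdivisionData G) :
    MarkedGraph m where
  V := {w : G.V // w ≠ G.lastVertex}
  H := {h : G.H // G.r h ≠ G.lastVertex}
  finV := inferInstance
  finH := inferInstance
  s h := if hs : G.r (G.s h) = G.lastVertex then
      ⟨G.s (d.other (G.s h)), d.r_s_ne (d.r_other _)⟩
    else ⟨G.s h, hs⟩
  s_invol := by
    rintro ⟨h, hh⟩
    by_cases hs : G.r (G.s h) = G.lastVertex
    · simp only [dif_pos hs, G.s_invol, dif_pos (d.r_other _), d.other_other hs]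
    · simp only [dif_neg hs, G.s_invol, dif_neg hh]
  s_ne := by
    rintro ⟨h, hh⟩ heq
    by_cases hs : G.r (G.s h) = G.lastVertex
    · simp only [dif_pos hs, Subtype.mk.injEq] at heq
      have := congrArg G.s heq
      rw [G.s_invol] at this
      exact d.other_ne hs this
    · simp only [dif_neg hs, Subtype.mk.injEq] at heq
      exact G.s_ne h heq
  r h := ⟨G.r h, h.2⟩
  m j := ⟨G.m j.castSucc, d.m_ne j⟩

section Unsubdivide

variable {G : MarkedGraph (m + 1)} (d : SubdivisionData G)

theorem unsubdivide_s_of_r_s_eq {h : (unsubdivide G d).H} (hs : G.r (G.s h) = G.lastVertex) :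
    ((unsubdivide G d).s h).1 = G.s (d.other (G.s h)) := by
  simp [hs]

theorem unsubdivide_s_of_r_s_ne {h : (unsubdivide G d).H} (hs : G.r (G.s h) ≠ G.lastVertex) :
    ((unsubdivide G d).s h).1 = G.s h := by
  simp [hs]

theorem unsubdivide_s_s {a : G.H} (ha : G.r a = G.lastVertex) :
    ((unsubdivide G d).s ⟨G.s a, d.r_s_ne ha⟩).1 = G.s (d.other a) := by
  rw [unsubdivide_s_of_r_s_eq d (by rwa [G.s_invol]), G.s_invol]

open Classical in
/-- `a` is the half-edge at the last vertex that receives `inr true`. -/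
noncomputable def subdivideIso {G' : MarkedGraph m} (δ : Iso G' (unsubdivide G d)) {a : G.H}
    (ha : G.r a = G.lastVertex) : Iso (subdivide G' (δ.tH.symm ⟨G.s a, d.r_s_ne ha⟩)) G where
  tV := (Equiv.optionCongr δ.tV).trans (Equiv.optionSubtypeNe G.lastVertex)
  tH := (Equiv.sumCongr δ.tH
      (Equiv.boolEquivOfPair (d.other_ne ha).symm (d.r_eq_iff_of_r_eq ha))).trans
    ((Equiv.sumComm _ _).trans (Equiv.sumCompl fun h => G.r h = G.lastVertex))
  comm_s := by
    set x := δ.tH.symm ⟨G.s a, d.r_s_ne ha⟩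
    have hx : (δ.tH x : G.H) = G.s a := by simp [x]
    have hsx : (δ.tH (G'.s x) : G.H) = G.s (d.other a) := by
      rw [δ.comm_s, Equiv.apply_symm_apply, unsubdivide_s_s d ha]
    rintro (y | _ | _)
    · by_cases h₁ : y = x
      · simp [h₁, hx, G.s_invol]
      by_cases h₂ : y = G'.s x
      · simp [h₂, hsx, G.s_invol, G'.s_ne x]
      have hy : G.r (G.s (δ.tH y)) ≠ G.lastVertex := by
        intro hy
        rcases (d.r_eq_iff_of_r_eq ha _).1 hy with h | h
        · exact h₁ (δ.tH.injective (Subtype.ext (by rw [hx, ← h, G.s_invol])))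
        · exact h₂ (δ.tH.injective (Subtype.ext (by rw [hsx, ← h, G.s_invol])))
      simp [h₁, h₂, δ.comm_s, hy]
    · simp [hsx]
    · simp [hx]
  comm_r := by
    rintro (y | _ | _)
    · simp [δ.comm_r]
    · simp [d.r_other]
    · simp [ha]
  comm_m := by
    refine Fin.lastCases ?_ fun j => ?_
    · simp [lastVertex]
      rfl
    · simp [δ.comm_m]

variable {G' : MarkedGraph m} {x : G'.H} (ψ : Iso (subdivide G' x) G)

theorem tV_none_of_subdivide : ψ.tV none = G.lastVertex := by
  simpa using ψ.tV_lastVertex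

theorem r_tH_ne_iff_isLeft (z : G'.H ⊕ Bool) : G.r (ψ.tH z) ≠ G.lastVertex ↔ z.isLeft := by
  rw [← ψ.comm_r, ← tV_none_of_subdivide ψ, ne_eq, ψ.tV.apply_eq_iff_eq]
  cases z <;> simp

theorem r_tH_inr_of_subdivide (b : Bool) : G.r (ψ.tH (.inr b)) = G.lastVertex := by
  by_contra h
  simpa using (r_tH_ne_iff_isLeft ψ (.inr b)).1 h

theorem other_tH_inr_of_subdivide (b : Bool) :
    d.other (ψ.tH (.inr b)) = ψ.tH (.inr !b) :=
  d.other_eq_of_ne (r_tH_inr_of_subdivide ψ b) (r_tH_inr_of_subdivide ψ !b)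
    (by simp)

open Classical in
noncomputable def restrictSubdivideIso : Iso G' (unsubdivide G d) where
  tV := Equiv.optionSubtype G.lastVertex ⟨ψ.tV, tV_none_of_subdivide ψ⟩
  tH := Equiv.sumIsLeft.symm.trans
    (ψ.tH.subtypeEquiv fun z => (r_tH_ne_iff_isLeft ψ z).symm)
  comm_s y := by
    apply Subtype.ext
    change ψ.tH (.inl (G'.s y)) = ((unsubdivide G d).s ⟨ψ.tH (.inl y), _⟩).1
    have ht : G.s (ψ.tH (.inl x)) = ψ.tH (.inr true) := by
      rw [← ψ.comm_s]; simp
    have hf : G.s (ψ.tH (.inl (G'.s x))) = ψ.tH (.inr false) := by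
      rw [← ψ.comm_s]; simp [G'.s_ne x]
    by_cases h₁ : y = x
    · subst h₁
      rw [unsubdivide_s_of_r_s_eq d (by simpa [ht] using r_tH_inr_of_subdivide ψ true)]
      rw [ht, other_tH_inr_of_subdivide d ψ true, Bool.not_true, ← hf, G.s_invol]
    by_cases h₂ : y = G'.s x
    · subst h₂
      rw [unsubdivide_s_of_r_s_eq d (by simpa [hf] using r_tH_inr_of_subdivide ψ false)]
      rw [hf, other_tH_inr_of_subdivide d ψ false, Bool.not_false, ← ht, G.s_invol, G'.s_invol]
    have hl : G.s (ψ.tH (.inl y)) = ψ.tH (.inl (G'.s y)) := by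
      rw [← ψ.comm_s]; simp [h₁, h₂]
    rw [unsubdivide_s_of_r_s_ne d (by rw [hl]; exact (r_tH_ne_iff_isLeft ψ _).2 rfl), hl]
  comm_r y := Subtype.ext (ψ.comm_r (.inl y))
  comm_m j := Subtype.ext (by simpa using ψ.comm_m j.castSucc)

theorem SubdivisionData.degree_lastVertex (d : SubdivisionData G) : G.degree G.lastVertex = 2 := by
  classical
  rw [degree, ← Nat.card_congr (Equiv.boolEquivOfPair d.ne d.r_eq_iff)]
  simp

/-- An isomorphism from a subdivision of `G'` onto `G` is determined by its restriction together
with the image of the new half-edge `inr true`, which may be either half-edge at the last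
vertex. -/
noncomputable def subdivideIsoData (p : (x : G'.H) × Iso (subdivide G' x) G) :
    Iso G' (unsubdivide G d) × {h : G.H // G.r h = G.lastVertex} :=
  (restrictSubdivideIso d p.2, ⟨p.2.tH (.inr true), r_tH_inr_of_subdivide p.2 true⟩)

theorem subdivideIsoData_surjective : Function.Surjective (subdivideIsoData d (G' := G')) :=
  fun ⟨δ, _, ha⟩ => ⟨⟨_, subdivideIso d δ ha⟩, Prod.ext (Iso.ext
    (Equiv.ext fun _ => Subtype.ext rfl) (Equiv.ext fun _ => Subtype.ext rfl)) rfl⟩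

theorem subdivideIsoData_injective : Function.Injective (subdivideIsoData d (G' := G')) := by
  rintro ⟨x, ψ⟩ ⟨x', χ⟩ h
  obtain ⟨h₁, h₂⟩ := Prod.mk.inj h
  have hV (v : G'.V) : ψ.tV (some v) = χ.tV (some v) := congrArg (fun δ => (δ.tV v).1) h₁
  have hH (y : G'.H) : ψ.tH (.inl y) = χ.tH (.inl y) := congrArg (fun δ => (δ.tH y).1) h₁
  have ht : ψ.tH (.inr true) = χ.tH (.inr true) := congrArg Subtype.val h₂
  have hf : ψ.tH (.inr false) = χ.tH (.inr false) := by
    have e₁ := other_tH_inr_of_subdivide d ψ true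
    have e₂ := other_tH_inr_of_subdivide d χ true
    rw [Bool.not_true] at e₁ e₂
    rw [← e₁, ← e₂, ht]
  have hx {x : G'.H} (ψ : Iso (subdivide G' x) G) : ψ.tH (.inl x) = G.s (ψ.tH (.inr true)) := by
    rw [← ψ.comm_s]
  obtain rfl : x = x' := Sum.inl_injective <| χ.tH.injective <| by rw [← hH, hx ψ, hx χ, ht]
  refine congrArg (Sigma.mk x) (Iso.ext (Equiv.ext ?_) (Equiv.ext ?_))
  · rintro (_ | v)
    · rw [tV_none_of_subdivide, tV_none_of_subdivide]
    · exact hV v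
  · rintro (y | _ | _)
    exacts [hH y, hf, ht]

theorem card_sigma_iso_subdivide (G' : MarkedGraph m) :
    Nat.card ((x : G'.H) × Iso (subdivide G' x) G) =
      2 * Nat.card (Iso G' (unsubdivide G d)) := by
  rw [Nat.card_eq_of_bijective _ ⟨subdivideIsoData_injective d, subdivideIsoData_surjective d⟩,
    Nat.card_prod, ← degree, d.degree_lastVertex, mul_comm]

theorem SubdivisionData.exists_iso (d : SubdivisionData G) :
    ∃ x, Nonempty (Iso (subdivide (unsubdivide G d) x) G) :=
  ⟨_, ⟨subdivideIso d (Iso.refl _) ((d.r_eq_iff _).2 (.inl rfl))⟩⟩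

theorem SubdivisionData.markCount_lastVertex (d : SubdivisionData G) :
    G.markCount G.lastVertex = 1 := by
  obtain ⟨x, ⟨ψ⟩⟩ := d.exists_iso
  rw [← tV_none_of_subdivide ψ, ψ.markCount_eq, markCount_subdivide_none]

theorem stable_unsubdivide (hG : G.Stable) : (unsubdivide G d).Stable := by
  obtain ⟨x, ⟨ψ⟩⟩ := d.exists_iso
  exact (stable_subdivide_iff _ x).1 (ψ.symm.stable hG)

theorem connected_unsubdivide (hG : G.Connected) : (unsubdivide G d).Connected := by
  obtain ⟨x, ⟨ψ⟩⟩ := d.exists_iso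
  exact connected_of_connected_subdivide (ψ.symm.connected hG)

theorem isGenus_unsubdivide {g : ℕ} (hG : G.IsGenus g) : (unsubdivide G d).IsGenus g := by
  obtain ⟨x, ⟨ψ⟩⟩ := d.exists_iso
  exact (isGenus_subdivide_iff _ x).1 (ψ.symm.isGenus hG)

theorem numEdges_unsubdivide : G.numEdges = (unsubdivide G d).numEdges + 1 := by
  obtain ⟨x, ⟨ψ⟩⟩ := d.exists_iso
  rw [← ψ.numEdges_eq, numEdges_subdivide]

end Unsubdivide

structure SplitData (G : MarkedGraph (m + 1)) where
  h₀ : G.H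
  i₀ : Fin m
  r_eq_iff : ∀ h, G.r h = G.lastVertex ↔ h = h₀
  m_eq_iff : ∀ j : Fin m, G.m j.castSucc = G.lastVertex ↔ j = i₀

theorem SplitData.r_s_h₀_ne {G : MarkedGraph (m + 1)} (d : SplitData G) :
    G.r (G.s d.h₀) ≠ G.lastVertex :=
  fun h => G.s_ne _ ((d.r_eq_iff _).1 h)

open Classical in
/-- Undo the splitting: delete the last vertex with its edge and put the marking `i₀` back at
the other end of that edge. -/
noncomputable abbrev unsplit (G : MarkedGraph (m + 1)) (d : SplitData G) : MarkedGraph m where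
  V := {w : G.V // w ≠ G.lastVertex}
  H := {h : G.H // G.r h ≠ G.lastVertex ∧ G.r (G.s h) ≠ G.lastVertex}
  finV := inferInstance
  finH := inferInstance
  s h := ⟨G.s h, h.2.2, by rw [G.s_invol]; exact h.2.1⟩
  s_invol h := Subtype.ext (G.s_invol h)
  s_ne h heq := G.s_ne h (congrArg Subtype.val heq)
  r h := ⟨G.r h, h.2.1⟩
  m j := if hj : j = d.i₀ then ⟨G.r (G.s d.h₀), d.r_s_h₀_ne⟩
    else ⟨G.m j.castSucc, fun h => hj ((d.m_eq_iff j).1 h)⟩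

section Unsplit

variable {G : MarkedGraph (m + 1)} (d : SplitData G)

theorem SplitData.not_mem_unsplit_iff (h : G.H) :
    ¬(G.r h ≠ G.lastVertex ∧ G.r (G.s h) ≠ G.lastVertex) ↔ h = d.h₀ ∨ h = G.s d.h₀ := by
  rw [not_and_or, not_not, not_not, d.r_eq_iff, d.r_eq_iff, ← G.s_involutive.eq_iff]

open Classical in
noncomputable def splitOffIso {G' : MarkedGraph m} (δ : Iso G' (unsplit G d)) :
    Iso (splitOff G' d.i₀) G where
  tV := (Equiv.optionCongr δ.tV).trans (Equiv.optionSubtypeNe G.lastVertex)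
  tH := (Equiv.sumCongr δ.tH
      (Equiv.boolEquivOfPair (G.s_ne d.h₀).symm d.not_mem_unsplit_iff)).trans
    (Equiv.sumCompl _)
  comm_s := by
    rintro (y | _ | _)
    · simp [δ.comm_s]
    · simpa using (G.s_invol _).symm
    · simp
  comm_r := by
    rintro (y | _ | _)
    · simp [δ.comm_r]
    · simp [δ.comm_m]
    · simp [(d.r_eq_iff _).2 rfl]
  comm_m := by
    refine Fin.lastCases ?_ fun j => ?_
    · simp [lastVertex]
      rfl
    · by_cases hj : j = d.i₀
      · simp [hj, (d.m_eq_iff _).2 rfl]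
      · simp [hj, δ.comm_m]

variable {G' : MarkedGraph m} {i : Fin m} (ψ : Iso (splitOff G' i) G)

theorem tV_none_of_splitOff : ψ.tV none = G.lastVertex := by
  simpa using ψ.tV_lastVertex

theorem eq_i₀_of_splitOff (ψ : Iso (splitOff G' i) G) : i = d.i₀ :=
  (d.m_eq_iff i).1 (by rw [← ψ.comm_m]; simpa using tV_none_of_splitOff ψ)

theorem tH_inr_true_of_splitOff : ψ.tH (.inr true) = d.h₀ :=
  (d.r_eq_iff _).1 (by rw [← ψ.comm_r]; exact tV_none_of_splitOff ψ)

theorem tH_inr_false_of_splitOff : ψ.tH (.inr false) = G.s d.h₀ := by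
  rw [← tH_inr_true_of_splitOff d ψ, ← ψ.comm_s]
  rfl

theorem mem_unsplit_iff_isLeft (z : G'.H ⊕ Bool) :
    (G.r (ψ.tH z) ≠ G.lastVertex ∧ G.r (G.s (ψ.tH z)) ≠ G.lastVertex) ↔ z.isLeft := by
  rw [← ψ.comm_s, ← ψ.comm_r, ← ψ.comm_r, ← tV_none_of_splitOff ψ, ne_eq, ne_eq,
    ψ.tV.apply_eq_iff_eq, ψ.tV.apply_eq_iff_eq]
  rcases z with y | _ | _ <;> simp

open Classical in
noncomputable def restrictSplitOffIso : Iso G' (unsplit G d) where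
  tV := Equiv.optionSubtype G.lastVertex ⟨ψ.tV, tV_none_of_splitOff ψ⟩
  tH := Equiv.sumIsLeft.symm.trans
    (ψ.tH.subtypeEquiv fun z => (mem_unsplit_iff_isLeft ψ z).symm)
  comm_s y := Subtype.ext (ψ.comm_s (.inl y))
  comm_r y := Subtype.ext (ψ.comm_r (.inl y))
  comm_m j := by
    apply Subtype.ext
    change ψ.tV (some (G'.m j)) = ((unsplit G d).m j).1
    obtain rfl := eq_i₀_of_splitOff d ψ
    by_cases hj : j = d.i₀
    · subst hj
      simp [← tH_inr_false_of_splitOff d ψ, ← ψ.comm_r]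
    · simpa [hj] using ψ.comm_m j.castSucc

theorem card_sigma_iso_splitOff (G' : MarkedGraph m) :
    Nat.card ((i : Fin m) × Iso (splitOff G' i) G) = Nat.card (Iso G' (unsplit G d)) := by
  refine Nat.card_eq_of_bijective (fun p => restrictSplitOffIso d p.2) ⟨?_, fun δ =>
    ⟨⟨_, splitOffIso d δ⟩, Iso.ext (Equiv.ext fun _ => Subtype.ext rfl)
      (Equiv.ext fun _ => Subtype.ext rfl)⟩⟩
  rintro ⟨i, ψ⟩ ⟨i', χ⟩ h
  obtain rfl : i = i' := (eq_i₀_of_splitOff d ψ).trans (eq_i₀_of_splitOff d χ).symm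
  refine congrArg (Sigma.mk i) (Iso.ext (Equiv.ext ?_) (Equiv.ext ?_))
  · rintro (_ | v)
    · rw [tV_none_of_splitOff, tV_none_of_splitOff]
    · exact congrArg (fun δ => (δ.tV v).1) h
  · rintro (y | _ | _)
    · exact congrArg (fun δ => (δ.tH y).1) h
    · rw [tH_inr_false_of_splitOff d, tH_inr_false_of_splitOff d]
    · rw [tH_inr_true_of_splitOff d, tH_inr_true_of_splitOff d]

theorem SplitData.exists_iso (d : SplitData G) : Nonempty (Iso (splitOff (unsplit G d) d.i₀) G) :=
  ⟨splitOffIso d (Iso.refl _)⟩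

theorem SplitData.degree_lastVertex (d : SplitData G) : G.degree G.lastVertex = 1 := by
  obtain ⟨ψ⟩ := d.exists_iso
  rw [← tV_none_of_splitOff ψ, ψ.degree_eq, degree_splitOff_none]

theorem SplitData.markCount_lastVertex (d : SplitData G) : G.markCount G.lastVertex = 2 := by
  obtain ⟨ψ⟩ := d.exists_iso
  rw [← tV_none_of_splitOff ψ, ψ.markCount_eq, markCount_splitOff_none]

theorem stable_unsplit (hG : G.Stable) : (unsplit G d).Stable := by
  obtain ⟨ψ⟩ := d.exists_iso
  exact (stable_splitOff_iff _ _).1 (ψ.symm.stable hG)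

theorem connected_unsplit (hG : G.Connected) : (unsplit G d).Connected := by
  obtain ⟨ψ⟩ := d.exists_iso
  exact connected_of_connected_splitOff (ψ.symm.connected hG)

theorem isGenus_unsplit {g : ℕ} (hG : G.IsGenus g) : (unsplit G d).IsGenus g := by
  obtain ⟨ψ⟩ := d.exists_iso
  exact (isGenus_splitOff_iff _ _).1 (ψ.symm.isGenus hG)

theorem numEdges_unsplit : G.numEdges = (unsplit G d).numEdges + 1 := by
  obtain ⟨ψ⟩ := d.exists_iso
  rw [← ψ.numEdges_eq, numEdges_splitOff]

end Unsplit

theorem eq_of_connected_of_closed {G : MarkedGraph n} (hG : G.Connected) {v : G.V}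
    (hv : ∀ h, G.r h = v → G.r (G.s h) = v) (w : G.V) : w = v := by
  induction hG.2 v w with
  | refl => rfl
  | tail _ hadj ih =>
    obtain ⟨h, hh, rfl⟩ := hadj
    exact hv h (hh.trans ih)

/-- If no edge leaves the last vertex, connectivity makes it the only vertex, and the genus
formula then bounds the number of markings. -/
theorem two_mul_add_le_of_closed {G : MarkedGraph (m + 1)} {g : ℕ} (hconn : G.Connected)
    (hgen : G.IsGenus g) (hv : ∀ h, G.r h = G.lastVertex → G.r (G.s h) = G.lastVertex)
    (h3 : G.degree G.lastVertex + G.markCount G.lastVertex ≤ 3) : 2 * g + m ≤ 2 := by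
  have hall := eq_of_connected_of_closed hconn hv
  have hV : Nat.card G.V = 1 :=
    Nat.card_eq_one_iff_unique.2 ⟨⟨fun v w => (hall v).trans (hall w).symm⟩, hconn.1⟩
  have hH : G.degree G.lastVertex = Nat.card G.H :=
    Nat.card_congr (Equiv.subtypeUnivEquiv fun h => hall _)
  have hM : G.markCount G.lastVertex = m + 1 := by
    rw [markCount, Nat.card_congr (Equiv.subtypeUnivEquiv fun i => hall _), Nat.card_fin]
  obtain ⟨e, he⟩ := G.even_card_H
  unfold IsGenus numEdges at hgen
  omega

theorem trichotomy {G : MarkedGraph (m + 1)} {g : ℕ} (hst : G.Stable) (hconn : G.Connected)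
    (hgen : G.IsGenus g) (hgm : 3 ≤ 2 * g + m) :
    4 ≤ G.degree G.lastVertex + G.markCount G.lastVertex ∨
      Nonempty (SubdivisionData G) ∨ Nonempty (SplitData G) := by
  rcases le_or_gt 4 (G.degree G.lastVertex + G.markCount G.lastVertex) with h4 | h4
  · exact .inl h4
  right
  have hM := markCount_eq_forgetLast G G.lastVertex
  rw [if_pos rfl] at hM
  have h3 : 3 ≤ G.degree G.lastVertex + G.markCount G.lastVertex := hst _
  obtain ⟨h₀, hr₀, hs₀⟩ : ∃ h, G.r h = G.lastVertex ∧ G.r (G.s h) ≠ G.lastVertex := by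
    by_contra! hv
    have := two_mul_add_le_of_closed hconn hgen hv (by omega)
    omega
  have hD : 1 ≤ G.degree G.lastVertex := Nat.card_pos_iff.2 ⟨⟨⟨h₀, hr₀⟩⟩, inferInstance⟩
  have hcases : (G.degree G.lastVertex = 1 ∧ (forgetLast G).markCount G.lastVertex = 1) ∨
      (G.degree G.lastVertex = 2 ∧ (forgetLast G).markCount G.lastVertex = 0) := by
    omega
  rcases hcases with ⟨hD₁, hM₁⟩ | ⟨hD₂, hM₀⟩
  · obtain ⟨hsub, -⟩ := Nat.card_eq_one_iff_unique.1 hD₁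
    obtain ⟨hsubm, ⟨j₀⟩⟩ := Nat.card_eq_one_iff_unique.1 hM₁
    refine .inr ⟨⟨h₀, j₀.1, fun h => ⟨fun hh => ?_, fun hh => hh ▸ hr₀⟩,
      fun j => ⟨fun hj => ?_, fun hj => hj ▸ j₀.2⟩⟩⟩
    · exact congrArg Subtype.val (hsub.elim ⟨h, hh⟩ ⟨h₀, hr₀⟩)
    · exact congrArg Subtype.val (hsubm.elim ⟨j, hj⟩ j₀)
  · obtain ⟨⟨h₂, hr₂⟩, hne, huniq⟩ := (Nat.card_eq_two_iff' ⟨h₀, hr₀⟩).1 hD₂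
    have hne : h₀ ≠ h₂ := fun h => hne (Subtype.ext h.symm)
    refine .inl ⟨⟨h₀, h₂, hne, fun h => ⟨fun hh => ?_, ?_⟩, fun h => hs₀ (h ▸ hr₂),
      fun j hj => (Finite.card_eq_zero_iff.1 hM₀).false ⟨j, hj⟩⟩⟩
    · by_cases h0 : h = h₀
      · exact .inl h0
      · exact .inr (congrArg Subtype.val (huniq ⟨h, hh⟩ fun h' => h0 (congrArg Subtype.val h')))
    · rintro (rfl | rfl) <;> assumption

theorem card_sigma_iso_eq_zero {ι : Type*} [Finite ι] {A : ι → MarkedGraph (m + 1)}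
    {G : MarkedGraph (m + 1)}
    (h : ∀ i, (A i).degree (A i).lastVertex = G.degree G.lastVertex →
      (A i).markCount (A i).lastVertex ≠ G.markCount G.lastVertex) :
    Nat.card ((i : ι) × Iso (A i) G) = 0 :=
  Finite.card_eq_zero_iff.2 ⟨fun ⟨i, ψ⟩ => h i (by rw [← ψ.degree_eq, ψ.tV_lastVertex])
    (by rw [← ψ.markCount_eq, ψ.tV_lastVertex])⟩

theorem sum_mul_card_iso_div_card_aut {k : ℕ} {S : Set (MarkedGraph k)} (hS : S.Finite)
    (huniq : ∀ G₁ ∈ S, ∀ G₂ ∈ S, Nonempty (Iso G₁ G₂) → G₁ = G₂) {A G₀ : MarkedGraph k}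
    (hG₀ : G₀ ∈ S) (ψ : Iso A G₀) (f : MarkedGraph k → ℚ) :
    ∑ G ∈ hS.toFinset, f G * Nat.card (Iso A G) / Nat.card (Iso G G) = f G₀ := by
  rw [Finset.sum_eq_single_of_mem G₀ (hS.mem_toFinset.2 hG₀), ψ.card_eq_card_aut, mul_div_assoc,
    div_self (by exact_mod_cast (Iso.card_aut_pos G₀).ne'), mul_one]
  intro G hG hne
  rw [Finite.card_eq_zero_iff.2 ⟨fun χ => hne (huniq _ (hS.mem_toFinset.1 hG) _ hG₀
    ⟨χ.symm.trans ψ⟩)⟩]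
  simp

/-- The signed number of ways in which `G` arises from `G'` by adding the last marking. Both
half-edges of an edge give the same subdivision, hence the weight `1 / 2`. -/
noncomputable def extensionCount (G' : MarkedGraph m) (G : MarkedGraph (m + 1)) : ℚ :=
  Nat.card ((v : G'.V) × Iso (markAt G' v) G) -
    Nat.card ((x : G'.H) × Iso (subdivide G' x) G) / 2 -
    Nat.card ((i : Fin m) × Iso (splitOff G' i) G)

theorem sum_extensionCount_div_card_aut {g : ℕ} {S : Set (MarkedGraph (m + 1))} (hS : S.Finite)
    (hrep : ∀ A : MarkedGraph (m + 1), A.Stable → A.Connected → A.IsGenus g →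
      ∃ G ∈ S, Nonempty (Iso A G))
    (huniq : ∀ G₁ ∈ S, ∀ G₂ ∈ S, Nonempty (Iso G₁ G₂) → G₁ = G₂) {G' : MarkedGraph m}
    (hst : G'.Stable) (hconn : G'.Connected) (hgen : G'.IsGenus g) :
    ∑ G ∈ hS.toFinset, extensionCount G' G / Nat.card (Iso G G) = 2 - g - (m + 1) := by
  have := Fintype.ofFinite G'.V
  have := Fintype.ofFinite G'.H
  have hone {A : MarkedGraph (m + 1)} (hA : A.Stable ∧ A.Connected ∧ A.IsGenus g) :
      ∑ G ∈ hS.toFinset, (Nat.card (Iso A G) : ℚ) / Nat.card (Iso G G) = 1 := by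
    obtain ⟨G₀, hG₀, ⟨ψ⟩⟩ := hrep A hA.1 hA.2.1 hA.2.2
    simpa using sum_mul_card_iso_div_card_aut hS huniq hG₀ ψ fun _ => 1
  have hV (v : G'.V) := hone ⟨stable_markAt hst v, hconn, hgen⟩
  have hH (x : G'.H) := hone ⟨(stable_subdivide_iff G' x).2 hst, connected_subdivide hconn x,
    (isGenus_subdivide_iff G' x).2 hgen⟩
  have hM (i : Fin m) := hone ⟨(stable_splitOff_iff G' i).2 hst, connected_splitOff hconn i,
    (isGenus_splitOff_iff G' i).2 hgen⟩
  calc ∑ G ∈ hS.toFinset, extensionCount G' G / Nat.card (Iso G G)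
      = ∑ v : G'.V, ∑ G ∈ hS.toFinset, (Nat.card (Iso (markAt G' v) G) : ℚ) / Nat.card (Iso G G)
        - (∑ x : G'.H, ∑ G ∈ hS.toFinset,
            (Nat.card (Iso (subdivide G' x) G) : ℚ) / Nat.card (Iso G G)) / 2
        - ∑ i : Fin m, ∑ G ∈ hS.toFinset,
            (Nat.card (Iso (splitOff G' i) G) : ℚ) / Nat.card (Iso G G) := by
        simp only [extensionCount, Nat.card_sigma, Nat.cast_sum, sub_div, Finset.sum_sub_distrib,
          Finset.sum_div]
        rw [Finset.sum_comm, Finset.sum_comm (γ := G'.H), Finset.sum_comm (γ := Fin m)]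
        simp only [div_right_comm _ (2 : ℚ)]
    _ = Nat.card G'.V - Nat.card G'.H / 2 - m := by
        simp [hV, hH, hM, Nat.card_eq_fintype_card]
    _ = 2 - g - (m + 1) := by
        obtain ⟨e, he⟩ := G'.even_card_H
        unfold IsGenus numEdges at hgen
        rw [he, ← two_mul, Nat.mul_div_cancel_left _ two_pos] at hgen
        rw [he]
        push_cast
        linarith [(by exact_mod_cast hgen : (Nat.card G'.V : ℚ) + g = 1 + e)]

theorem sum_sign_mul_extensionCount_div_card_aut_of_eq {g : ℕ} {S' : Set (MarkedGraph m)}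
    (hS' : S'.Finite)
    (hrep' : ∀ A : MarkedGraph m, A.Stable → A.Connected → A.IsGenus g →
      ∃ G ∈ S', Nonempty (Iso A G))
    (huniq' : ∀ G₁ ∈ S', ∀ G₂ ∈ S', Nonempty (Iso G₁ G₂) → G₁ = G₂) {G : MarkedGraph (m + 1)}
    {C : MarkedGraph m} (hst : C.Stable) (hconn : C.Connected) (hgen : C.IsGenus g) (c : ℚ)
    (hcount : ∀ G' ∈ S', extensionCount G' G = c * Nat.card (Iso C G')) :
    ∑ G' ∈ hS'.toFinset, (-1 : ℚ) ^ G'.numEdges * extensionCount G' G / Nat.card (Iso G' G') =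
      c * (-1) ^ C.numEdges := by
  obtain ⟨G₀, hG₀, ⟨ψ⟩⟩ := hrep' C hst hconn hgen
  rw [ψ.numEdges_eq,
    ← sum_mul_card_iso_div_card_aut hS' huniq' hG₀ ψ fun G' => (-1) ^ G'.numEdges,
    Finset.mul_sum]
  refine Finset.sum_congr rfl fun G' hG' => ?_
  rw [hcount G' (hS'.mem_toFinset.1 hG')]
  ring

theorem card_sigma_iso_markAt_eq_zero {G' : MarkedGraph m} (hG' : G'.Stable)
    {G : MarkedGraph (m + 1)} (hG : G.degree G.lastVertex + G.markCount G.lastVertex ≤ 3) :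
    Nat.card ((v : G'.V) × Iso (markAt G' v) G) = 0 :=
  card_sigma_iso_eq_zero fun v _ _ => by have := valence_markAt_lastVertex hG' v; omega

theorem card_sigma_iso_subdivide_eq_zero (G' : MarkedGraph m) {G : MarkedGraph (m + 1)}
    (hG : ¬(G.degree G.lastVertex = 2 ∧ G.markCount G.lastVertex = 1)) :
    Nat.card ((x : G'.H) × Iso (subdivide G' x) G) = 0 :=
  card_sigma_iso_eq_zero fun x hd hm => hG ⟨by simpa [degree_subdivide_none] using hd.symm,
    by simpa [markCount_subdivide_none] using hm.symm⟩

theorem card_sigma_iso_splitOff_eq_zero (G' : MarkedGraph m) {G : MarkedGraph (m + 1)}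
    (hG : ¬(G.degree G.lastVertex = 1 ∧ G.markCount G.lastVertex = 2)) :
    Nat.card ((i : Fin m) × Iso (splitOff G' i) G) = 0 :=
  card_sigma_iso_eq_zero fun i hd hm => hG ⟨by simpa [degree_splitOff_none] using hd.symm,
    by simpa [markCount_splitOff_none] using hm.symm⟩

theorem sum_sign_mul_extensionCount_div_card_aut {g : ℕ} {S' : Set (MarkedGraph m)}
    (hS' : S'.Finite) (hmem' : ∀ G ∈ S', G.Stable ∧ G.Connected ∧ G.IsGenus g)
    (hrep' : ∀ A : MarkedGraph m, A.Stable → A.Connected → A.IsGenus g →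
      ∃ G ∈ S', Nonempty (Iso A G))
    (huniq' : ∀ G₁ ∈ S', ∀ G₂ ∈ S', Nonempty (Iso G₁ G₂) → G₁ = G₂) {G : MarkedGraph (m + 1)}
    (hst : G.Stable) (hconn : G.Connected) (hgen : G.IsGenus g) (hgm : 3 ≤ 2 * g + m) :
    ∑ G' ∈ hS'.toFinset, (-1 : ℚ) ^ G'.numEdges * extensionCount G' G / Nat.card (Iso G' G') =
      (-1) ^ G.numEdges := by
  rcases trichotomy hst hconn hgen hgm with h4 | ⟨⟨d⟩⟩ | ⟨⟨d⟩⟩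
  · rw [sum_sign_mul_extensionCount_div_card_aut_of_eq hS' hrep' huniq'
      (stable_forgetLast hst h4) hconn hgen 1 fun G' _ => by
        rw [extensionCount, card_sigma_iso_markAt, card_sigma_iso_subdivide_eq_zero G' (by omega),
          card_sigma_iso_splitOff_eq_zero G' (by omega), Iso.card_comm]
        simp, one_mul]
    rfl
  · have hd := d.degree_lastVertex
    have hm := d.markCount_lastVertex
    rw [sum_sign_mul_extensionCount_div_card_aut_of_eq hS' hrep' huniq' (stable_unsubdivide d hst)
      (connected_unsubdivide d hconn) (isGenus_unsubdivide d hgen) (-1) fun G' hG' => by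
        rw [extensionCount, card_sigma_iso_markAt_eq_zero (hmem' G' hG').1 (by omega),
          card_sigma_iso_splitOff_eq_zero G' (by omega), card_sigma_iso_subdivide d, Iso.card_comm]
        push_cast
        ring, numEdges_unsubdivide d, pow_succ]
    ring
  · have hd := d.degree_lastVertex
    have hm := d.markCount_lastVertex
    rw [sum_sign_mul_extensionCount_div_card_aut_of_eq hS' hrep' huniq' (stable_unsplit d hst)
      (connected_unsplit d hconn) (isGenus_unsplit d hgen) (-1) fun G' hG' => by
        rw [extensionCount, card_sigma_iso_markAt_eq_zero (hmem' G' hG').1 (by omega),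
          card_sigma_iso_subdivide_eq_zero G' (by omega), card_sigma_iso_splitOff d, Iso.card_comm]
        push_cast
        ring, numEdges_unsplit d, pow_succ]
    ring

theorem sum_sign_div_card_aut_succ {g : ℕ} (hgm : 3 ≤ 2 * g + m)
    {S : Set (MarkedGraph (m + 1))} (hfin : S.Finite)
    (hmem : ∀ G ∈ S, G.Stable ∧ G.Connected ∧ G.IsGenus g)
    (hrep : ∀ A : MarkedGraph (m + 1), A.Stable → A.Connected → A.IsGenus g →
      ∃ G ∈ S, Nonempty (Iso A G))
    (huniq : ∀ G₁ ∈ S, ∀ G₂ ∈ S, Nonempty (Iso G₁ G₂) → G₁ = G₂)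
    {S' : Set (MarkedGraph m)} (hfin' : S'.Finite)
    (hmem' : ∀ G ∈ S', G.Stable ∧ G.Connected ∧ G.IsGenus g)
    (hrep' : ∀ A : MarkedGraph m, A.Stable → A.Connected → A.IsGenus g →
      ∃ G ∈ S', Nonempty (Iso A G))
    (huniq' : ∀ G₁ ∈ S', ∀ G₂ ∈ S', Nonempty (Iso G₁ G₂) → G₁ = G₂) :
    ∑ G ∈ hfin.toFinset, (-1 : ℚ) ^ G.numEdges / Nat.card (Iso G G) =
      ((2 : ℚ) - g - ↑(m + 1)) * ∑ G' ∈ hfin'.toFinset,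
        (-1 : ℚ) ^ G'.numEdges / Nat.card (Iso G' G') := by
  calc ∑ G ∈ hfin.toFinset, (-1 : ℚ) ^ G.numEdges / Nat.card (Iso G G)
      = ∑ G ∈ hfin.toFinset, ∑ G' ∈ hfin'.toFinset,
          (-1 : ℚ) ^ G'.numEdges * extensionCount G' G / Nat.card (Iso G' G') /
            Nat.card (Iso G G) := by
        refine Finset.sum_congr rfl fun G hG => ?_
        obtain ⟨hst, hconn, hgen⟩ := hmem G (hfin.mem_toFinset.1 hG)
        rw [← Finset.sum_div,
          sum_sign_mul_extensionCount_div_card_aut hfin' hmem' hrep' huniq' hst hconn hgen hgm]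
    _ = ∑ G' ∈ hfin'.toFinset, (-1 : ℚ) ^ G'.numEdges / Nat.card (Iso G' G') *
          ∑ G ∈ hfin.toFinset, extensionCount G' G / Nat.card (Iso G G) := by
        rw [Finset.sum_comm]
        refine Finset.sum_congr rfl fun G' _ => ?_
        rw [Finset.mul_sum]
        refine Finset.sum_congr rfl fun G _ => ?_
        ring
    _ = ((2 : ℚ) - g - ↑(m + 1)) * ∑ G' ∈ hfin'.toFinset,
          (-1 : ℚ) ^ G'.numEdges / Nat.card (Iso G' G') := by
        rw [Finset.mul_sum]
        refine Finset.sum_congr rfl fun G' hG' => ?_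
        obtain ⟨hst, hconn, hgen⟩ := hmem' G' (hfin'.mem_toFinset.1 hG')
        rw [sum_extensionCount_div_card_aut hfin hrep huniq hst hconn hgen]
        push_cast
        ring

end MarkedGraph

/-- Induction step for the orbifold Euler characteristic of categories of stable,
connected, genus `g`, `n`-marked graphs: forgetting the last marked point multiplies
the orbifold Euler characteristic by `(2 - g - n)`. -/
theorem orbifold_euler_char_marked_graphs_step (g n : ℕ) (hn : 1 ≤ n)
    (hgn : 0 < 2 * (g : ℤ) - 2 + ((n : ℤ) - 1))
    (S : Set (MarkedGraph n)) (hfin : S.Finite)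
    (hmem : ∀ G ∈ S, G.Stable ∧ G.Connected ∧ G.IsGenus g)
    (hrep : ∀ G' : MarkedGraph n, G'.Stable → G'.Connected → G'.IsGenus g →
      ∃ G ∈ S, Nonempty (MarkedGraph.Iso G' G))
    (huniq : ∀ G₁ ∈ S, ∀ G₂ ∈ S, Nonempty (MarkedGraph.Iso G₁ G₂) → G₁ = G₂)
    (S' : Set (MarkedGraph (n - 1))) (hfin' : S'.Finite)
    (hmem' : ∀ G ∈ S', G.Stable ∧ G.Connected ∧ G.IsGenus g)
    (hrep' : ∀ G' : MarkedGraph (n - 1), G'.Stable → G'.Connected → G'.IsGenus g →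
      ∃ G ∈ S', Nonempty (MarkedGraph.Iso G' G))
    (huniq' : ∀ G₁ ∈ S', ∀ G₂ ∈ S', Nonempty (MarkedGraph.Iso G₁ G₂) → G₁ = G₂) :
    (∑ᶠ G ∈ S, ((-1 : ℚ)) ^ G.numEdges / (Nat.card (MarkedGraph.Iso G G) : ℚ)) =
      ((2 : ℚ) - g - n) *
        ∑ᶠ G ∈ S', ((-1 : ℚ)) ^ G.numEdges / (Nat.card (MarkedGraph.Iso G G) : ℚ) := by
  obtain ⟨m, rfl⟩ : ∃ m, n = m + 1 := ⟨n - 1, by omega⟩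
  have hgm : 3 ≤ 2 * g + m := by push_cast at hgn; omega
  rw [← hfin.coe_toFinset, finsum_mem_coe_finset, ← hfin'.coe_toFinset, finsum_mem_coe_finset]
  exact MarkedGraph.sum_sign_div_card_aut_succ hgm hfin hmem hrep huniq hfin' hmem' hrep' huniq'
end
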